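/- arXiv:math/0311186 — 5 statements merged into one kernel-verified Lean document; each statement's English description precedes it below -/
import Mathlib

section
/- There exists an absolute constant c_C > 0 such that whenever 0 ≤ 1/p ≤ 1/2 and 1/2 ≤ 1/q ≤ 1, for every integer N ≥ 1 one has c_C · N^{1/2 − 1/p} ≤ C_N(p→q) ≤ N^{1/2 − 1/p}; the upper bound means ‖f‖_{L^q} ≤ N^{1/2 − 1/p} ‖a‖_{ℓ^p} for all a ∈ ℂ^N, and the lower bound means there exists a ∈ ℂ^N \ {0} with ‖f‖_{L^q} ≥ c_C N^{1/2 − 1/p} ‖a‖_{ℓ^p}. -/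
open scoped ENNReal

/-- The `ℓ^p` norm of the vector `(a 0, …, a (N-1)) ∈ ℂ^N`, for `p ∈ [1,∞]`. -/
noncomputable def lpNorm (p : ℝ≥0∞) (N : ℕ) (a : ℕ → ℂ) : ℝ :=
  if p = ⊤ then ((Finset.range N).sup fun n => ‖a n‖₊ : NNReal)
  else (∑ n ∈ Finset.range N, ‖a n‖ ^ p.toReal) ^ (1 / p.toReal)

/-- The trigonometric sum `f(t) = ∑_{n=0}^{N-1} a_n e^{int}`. -/
noncomputable def trigSum (N : ℕ) (a : ℕ → ℂ) (t : ℝ) : ℂ :=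
  ∑ n ∈ Finset.range N, a n * Complex.exp (Complex.I * n * t)

/-- The (normalized) `L^q` norm of a `2π`-periodic function on `[-π,π]`, for `q ∈ [1,∞]`. -/
noncomputable def LqNorm (q : ℝ≥0∞) (f : ℝ → ℂ) : ℝ :=
  if q = ⊤ then ⨆ t : Set.Icc (-Real.pi) Real.pi, ‖f ↑t‖
  else ((2 * Real.pi)⁻¹ * ∫ t in (-Real.pi)..Real.pi, ‖f t‖ ^ q.toReal) ^ (1 / q.toReal)

/-!
Upper bound: on the normalized circle `‖f‖_q ≤ ‖f‖_2` for `q ≤ 2` (Jensen), `‖f‖_2 = ‖a‖_2`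
(Parseval), and `‖a‖_2 ≤ N^{1/2-1/p} ‖a‖_p` by the power-mean inequality.

Lower bound: take the Rudin–Shapiro pair `P_{k+1} = P_k + z^{2^k} Q_k`,
`Q_{k+1} = P_k - z^{2^k} Q_k` with `2^k ≤ N < 2^{k+1}`. Its coefficients are unimodular on
`[0, 2^k)`, and the parallelogram law gives `|P_k|² + |Q_k|² = 2^{k+1}` on the unit circle.
So `‖P_k‖_∞ ≤ √(2^{k+1})` while `‖P_k‖_2² = 2^k`, hence
`‖P_k‖_q ≥ ‖P_k‖_1 ≥ ‖P_k‖_2² / ‖P_k‖_∞ ≥ √N / 2`, whereas `N^{1/2-1/p} ‖a‖_p ≤ √N` for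
unimodular coefficients. This gives `c = 1/2`.
-/

open Finset Real
open scoped Interval ComplexConjugate

lemma LqNorm_eq_average {q : ℝ≥0∞} (hq : q ≠ ⊤) (f : ℝ → ℂ) :
    LqNorm q f = (⨍ t in -π..π, ‖f t‖ ^ q.toReal) ^ q.toReal⁻¹ := by
  rw [LqNorm, if_neg hq, interval_average_eq, smul_eq_mul, one_div, sub_neg_eq_add, two_mul]

open MeasureTheory in
lemma average_rpow_rpow_inv_le {E : Type*} [NormedAddCommGroup E] {f : ℝ → E}
    (hf : Continuous f) {a b : ℝ} (hab : a < b) {r s : ℝ} (hr : 0 < r) (hrs : r ≤ s) :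
    (⨍ t in a..b, ‖f t‖ ^ r) ^ r⁻¹ ≤ (⨍ t in a..b, ‖f t‖ ^ s) ^ s⁻¹ := by
  have hs : 0 < s := hr.trans_le hrs
  have hcont : ∀ u : ℝ, 0 < u → Continuous fun t => ‖f t‖ ^ u := fun u hu =>
    hf.norm.rpow_const fun _ => Or.inr hu.le
  have hvol : volume (Ι a b) = ENNReal.ofReal (b - a) := by
    rw [Set.uIoc_of_le hab.le, Real.volume_Ioc]
  have hpow : ∀ t, (‖f t‖ ^ r) ^ (s / r) = ‖f t‖ ^ s := fun t => by
    rw [← Real.rpow_mul (norm_nonneg _), mul_div_cancel₀ _ hr.ne']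
  have jensen := (convexOn_rpow ((one_le_div hr).2 hrs)).map_set_average_le
    (continuousOn_id.rpow_const fun _ _ => Or.inr (div_nonneg hs.le hr.le)) isClosed_Ici
    (μ := volume) (t := Ι a b) (by simp [hvol, hab]) (by simp [hvol])
    (Filter.Eventually.of_forall fun t => Real.rpow_nonneg (norm_nonneg (f t)) r)
    ((hcont r hr).integrableOn_uIoc)
    (by simpa only [Function.comp_def, hpow] using (hcont s hs).integrableOn_uIoc)
  simp only [hpow] at jensen
  have havg : 0 ≤ ⨍ t in a..b, ‖f t‖ ^ r := integral_nonneg fun t => by positivity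
  calc (⨍ t in a..b, ‖f t‖ ^ r) ^ r⁻¹
      = ((⨍ t in a..b, ‖f t‖ ^ r) ^ (s / r)) ^ s⁻¹ := by
        rw [← Real.rpow_mul havg]; field_simp
    _ ≤ _ := Real.rpow_le_rpow (by positivity) jensen (by positivity)

lemma LqNorm_mono {f : ℝ → ℂ} (hf : Continuous f) {q r : ℝ≥0∞} (hq : 0 < q)
    (hqr : q ≤ r) (hr : r ≠ ⊤) : LqNorm q f ≤ LqNorm r f := by
  have hq' : q ≠ ⊤ := ne_top_of_le_ne_top hr hqr
  rw [LqNorm_eq_average hq', LqNorm_eq_average hr]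
  exact average_rpow_rpow_inv_le hf (by linarith [pi_pos]) (ENNReal.toReal_pos hq.ne' hq')
    (ENNReal.toReal_mono hr hqr)

lemma average_sq_le_mul_LqNorm_one {f : ℝ → ℂ} (hf : Continuous f) {C : ℝ}
    (hC : ∀ t, ‖f t‖ ≤ C) : ⨍ t in -π..π, ‖f t‖ ^ 2 ≤ C * LqNorm 1 f := by
  rw [LqNorm_eq_average ENNReal.one_ne_top]
  simp only [ENNReal.toReal_one, inv_one, Real.rpow_one]
  have hint : ∫ t in -π..π, ‖f t‖ ^ 2 ≤ ∫ t in -π..π, C * ‖f t‖ :=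
    intervalIntegral.integral_mono_on (by linarith [pi_pos])
      ((hf.norm.pow 2).intervalIntegrable _ _)
      ((continuous_const.mul hf.norm).intervalIntegrable _ _)
      fun t _ => by rw [sq]; exact mul_le_mul_of_nonneg_right (hC t) (norm_nonneg _)
  rw [intervalIntegral.integral_const_mul] at hint
  rw [interval_average_eq, interval_average_eq, smul_eq_mul, smul_eq_mul, mul_left_comm]
  exact mul_le_mul_of_nonneg_left hint (inv_nonneg.2 (by linarith [pi_pos]))

lemma trigSum_continuous (N : ℕ) (a : ℕ → ℂ) : Continuous (trigSum N a) := by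
  unfold trigSum; fun_prop

open Complex in
lemma integral_exp_int_mul_I (k : ℤ) :
    ∫ t in -π..π, Complex.exp (k * I * t) = if k = 0 then ((2 * π : ℝ) : ℂ) else 0 := by
  split_ifs with hk
  · simp [hk, two_mul]
  · have hc : (k * I : ℂ) ≠ 0 := by simp [hk]
    have hper : Complex.exp (k * I * π) = Complex.exp (k * I * ↑(-π)) := by
      rw [show (k * I * π : ℂ) = k * I * ↑(-π) + k * (2 * π * I) by push_cast; ring,
        Complex.exp_add, exp_int_mul_two_pi_mul_I, mul_one]
    rw [integral_exp_mul_complex hc, hper, sub_self, zero_div]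

open Complex in
lemma integral_exp_mul_conj_exp (m n : ℕ) :
    ∫ t in -π..π, Complex.exp (I * m * t) * conj (Complex.exp (I * n * t)) =
      if m = n then ((2 * π : ℝ) : ℂ) else 0 := by
  have hexp : ∀ t : ℝ, Complex.exp (I * m * t) * conj (Complex.exp (I * n * t)) =
      Complex.exp (((m - n : ℤ) : ℂ) * I * t) := fun t => by
    rw [← Complex.exp_conj, ← Complex.exp_add]
    congr 1
    simp only [map_mul, conj_I, conj_natCast, conj_ofReal]
    push_cast; ring
  simp_rw [hexp, integral_exp_int_mul_I, sub_eq_zero, Nat.cast_inj]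

open Complex in
lemma average_norm_trigSum_sq (N : ℕ) (a : ℕ → ℂ) :
    ⨍ t in -π..π, ‖trigSum N a t‖ ^ 2 = ∑ n ∈ range N, ‖a n‖ ^ 2 := by
  have h2π : (2 * π : ℝ) ≠ 0 := by positivity
  rw [interval_average_eq, smul_eq_mul, sub_neg_eq_add, ← two_mul, inv_mul_eq_iff_eq_mul₀ h2π]
  apply Complex.ofReal_injective
  calc ((∫ t in -π..π, ‖trigSum N a t‖ ^ 2 : ℝ) : ℂ)
      = ∫ t in -π..π, trigSum N a t * conj (trigSum N a t) := by
        rw [← intervalIntegral.integral_ofReal]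
        simp only [mul_conj', ofReal_pow]
    _ = ∑ m ∈ range N, ∑ n ∈ range N, a m * conj (a n) *
          ∫ t in -π..π, Complex.exp (I * m * t) * conj (Complex.exp (I * n * t)) := by
        simp only [trigSum, map_sum, map_mul, sum_mul_sum]
        rw [intervalIntegral.integral_finsetSum fun m _ => ?_]
        · refine sum_congr rfl fun m _ => ?_
          rw [intervalIntegral.integral_finsetSum fun n _ => ?_]
          · refine sum_congr rfl fun n _ => ?_
            rw [← intervalIntegral.integral_const_mul]
            congr 1; ext t; ring
          · exact (by fun_prop : Continuous _).intervalIntegrable _ _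
        · exact (by fun_prop : Continuous _).intervalIntegrable _ _
    _ = ∑ m ∈ range N, a m * conj (a m) * ((2 * π : ℝ) : ℂ) := by
        refine sum_congr rfl fun m hm => ?_
        simp only [integral_exp_mul_conj_exp, mul_ite, mul_zero, sum_ite_eq, if_pos hm]
    _ = ((2 * π * ∑ n ∈ range N, ‖a n‖ ^ 2 : ℝ) : ℂ) := by
        simp only [mul_conj']; push_cast; rw [mul_sum]
        exact sum_congr rfl fun n _ => by ring

lemma LqNorm_two_trigSum (N : ℕ) (a : ℕ → ℂ) : LqNorm 2 (trigSum N a) = lpNorm 2 N a := by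
  rw [LqNorm_eq_average ENNReal.ofNat_ne_top, lpNorm, if_neg ENNReal.ofNat_ne_top,
    ENNReal.toReal_ofNat]
  simp only [Real.rpow_two, average_norm_trigSum_sq, one_div]

lemma lpNorm_two_le {p : ℝ≥0∞} (hp : 2 ≤ p) (N : ℕ) (a : ℕ → ℂ) :
    lpNorm 2 N a ≤ (N : ℝ) ^ ((1 : ℝ) / 2 - p⁻¹.toReal) * lpNorm p N a := by
  rw [lpNorm, if_neg ENNReal.ofNat_ne_top, ENNReal.toReal_ofNat]
  rcases eq_or_ne p ⊤ with rfl | hp_top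
  · rw [lpNorm, if_pos rfl, ENNReal.inv_top, ENNReal.toReal_zero, sub_zero]
    set S : ℝ := (((range N).sup fun n => ‖a n‖₊ : NNReal) : ℝ)
    have hS : ∀ n ∈ range N, ‖a n‖ ≤ S := fun n hn => by
      exact_mod_cast le_sup (f := fun n => ‖a n‖₊) hn
    calc (∑ n ∈ range N, ‖a n‖ ^ (2 : ℝ)) ^ (1 / 2 : ℝ)
        ≤ (∑ n ∈ range N, S ^ (2 : ℝ)) ^ (1 / 2 : ℝ) := by
          gcongr with n hn; exact hS n hn
      _ = (N : ℝ) ^ (1 / 2 : ℝ) * S := by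
          rw [sum_const, card_range, nsmul_eq_mul, Real.mul_rpow (by positivity) (by positivity),
            ← Real.rpow_mul (by positivity)]
          norm_num
  · set r := p.toReal
    have hr : 2 ≤ r := by simpa using ENNReal.toReal_mono hp_top hp
    rw [lpNorm, if_neg hp_top, ENNReal.toReal_inv]
    have power_mean := Real.rpow_sum_le_const_mul_sum_rpow_of_nonneg (s := range N)
      (f := fun n => ‖a n‖ ^ (2 : ℝ)) (p := r / 2) (by linarith) (fun _ _ => by positivity)
    simp only [← Real.rpow_mul (norm_nonneg _), mul_div_cancel₀ _ (two_ne_zero' ℝ),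
      card_range] at power_mean
    calc (∑ n ∈ range N, ‖a n‖ ^ (2 : ℝ)) ^ (1 / 2 : ℝ)
        = ((∑ n ∈ range N, ‖a n‖ ^ (2 : ℝ)) ^ (r / 2)) ^ (1 / r) := by
          rw [← Real.rpow_mul (by positivity)]; field_simp
      _ ≤ ((N : ℝ) ^ (r / 2 - 1) * ∑ n ∈ range N, ‖a n‖ ^ r) ^ (1 / r) := by gcongr
      _ = (N : ℝ) ^ (1 / 2 - r⁻¹) * (∑ n ∈ range N, ‖a n‖ ^ r) ^ (1 / r) := by
          rw [Real.mul_rpow (by positivity) (by positivity), ← Real.rpow_mul (by positivity)]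
          congr 2
          field_simp

lemma lpNorm_le_of_norm_le_one (p : ℝ≥0∞) (N : ℕ) {a : ℕ → ℂ} (ha : ∀ n, ‖a n‖ ≤ 1) :
    lpNorm p N a ≤ (N : ℝ) ^ p⁻¹.toReal := by
  rcases eq_or_ne p ⊤ with rfl | hp
  · rw [lpNorm, if_pos rfl, ENNReal.inv_top, ENNReal.toReal_zero, Real.rpow_zero]
    exact_mod_cast Finset.sup_le fun n _ => (by exact_mod_cast ha n : ‖a n‖₊ ≤ 1)
  · rw [lpNorm, if_neg hp, ENNReal.toReal_inv, ← one_div]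
    gcongr
    calc ∑ n ∈ range N, ‖a n‖ ^ p.toReal ≤ ∑ n ∈ range N, (1 : ℝ) :=
          sum_le_sum fun n _ => Real.rpow_le_one (norm_nonneg _) (ha n) ENNReal.toReal_nonneg
      _ = N := by simp

lemma rpow_mul_lpNorm_le_sqrt (p : ℝ≥0∞) {N : ℕ} (hN : 0 < N) {a : ℕ → ℂ}
    (ha : ∀ n, ‖a n‖ ≤ 1) : (N : ℝ) ^ ((1 : ℝ) / 2 - p⁻¹.toReal) * lpNorm p N a ≤ √N := by
  calc (N : ℝ) ^ ((1 : ℝ) / 2 - p⁻¹.toReal) * lpNorm p N a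
      ≤ (N : ℝ) ^ ((1 : ℝ) / 2 - p⁻¹.toReal) * (N : ℝ) ^ p⁻¹.toReal := by
        gcongr; exact lpNorm_le_of_norm_le_one p N ha
    _ = √N := by rw [← Real.rpow_add (by positivity), sub_add_cancel, Real.sqrt_eq_rpow]

open Polynomial

noncomputable def rudinShapiro : ℕ → ℂ[X] × ℂ[X]
  | 0 => (1, 1)
  | k + 1 => ((rudinShapiro k).1 + X ^ 2 ^ k * (rudinShapiro k).2,
      (rudinShapiro k).1 - X ^ 2 ^ k * (rudinShapiro k).2)

lemma norm_coeff_rudinShapiro (k n : ℕ) :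
    ‖(rudinShapiro k).1.coeff n‖ = (if n < 2 ^ k then 1 else 0) ∧
      ‖(rudinShapiro k).2.coeff n‖ = (if n < 2 ^ k then 1 else 0) := by
  induction k generalizing n with
  | zero =>
    simp only [rudinShapiro, coeff_one, pow_zero, Nat.lt_one_iff, eq_comm (a := n)]
    split_ifs <;> simp
  | succ k ih =>
    simp only [rudinShapiro, coeff_add, coeff_sub, coeff_X_pow_mul']
    by_cases hn : n < 2 ^ k
    · simp [(ih n).1, hn, not_le.2 hn, pow_succ, show n < 2 ^ k * 2 by omega]
    · have h0 : (rudinShapiro k).1.coeff n = 0 := norm_eq_zero.1 (by simp [(ih n).1, hn])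
      simp [h0, not_lt.1 hn, (ih (n - 2 ^ k)).2, pow_succ,
        show n - 2 ^ k < 2 ^ k ↔ n < 2 ^ k * 2 by omega]

lemma natDegree_rudinShapiro_fst_lt (k : ℕ) : (rudinShapiro k).1.natDegree < 2 ^ k := by
  have hdeg : (rudinShapiro k).1.natDegree ≤ 2 ^ k - 1 :=
    natDegree_le_iff_coeff_eq_zero.2 fun n hn =>
      norm_eq_zero.1 (by rw [(norm_coeff_rudinShapiro k n).1, if_neg (by omega)])
  have := Nat.one_le_two_pow (n := k)
  omega

lemma norm_eval_rudinShapiro_sq_add {z : ℂ} (hz : ‖z‖ = 1) (k : ℕ) :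
    ‖(rudinShapiro k).1.eval z‖ ^ 2 + ‖(rudinShapiro k).2.eval z‖ ^ 2 = 2 ^ (k + 1) := by
  induction k with
  | zero => norm_num [rudinShapiro]
  | succ k ih =>
    simp only [rudinShapiro, eval_add, eval_sub, eval_mul, eval_pow, eval_X]
    have hpar := parallelogram_law_with_norm ℂ ((rudinShapiro k).1.eval z)
      (z ^ 2 ^ k * (rudinShapiro k).2.eval z)
    simp only [norm_mul, norm_pow, hz, one_pow, one_mul] at hpar
    rw [hpar, ih, pow_succ _ (k + 1)]
    ring

lemma trigSum_coeff_eq_eval {P : ℂ[X]} {N : ℕ} (hP : P.natDegree < N) (t : ℝ) :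
    trigSum N P.coeff t = P.eval (Complex.exp (Complex.I * t)) := by
  rw [trigSum, eval_eq_sum_range' hP]
  refine sum_congr rfl fun n _ => ?_
  rw [← Complex.exp_nat_mul]
  ring_nf

lemma exists_sqrt_le_two_mul_LqNorm_one_trigSum {N : ℕ} (hN : 0 < N) :
    ∃ a : ℕ → ℂ, a 0 ≠ 0 ∧ (∀ n, ‖a n‖ ≤ 1) ∧ √N ≤ 2 * LqNorm 1 (trigSum N a) := by
  set k := Nat.log 2 N
  have hkN : 2 ^ k ≤ N := Nat.pow_log_le_self 2 hN.ne'
  have hNk : N < 2 ^ (k + 1) := Nat.lt_pow_succ_log_self one_lt_two N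
  set P := (rudinShapiro k).1
  have hcoeff : ∀ n, ‖P.coeff n‖ = if n < 2 ^ k then 1 else 0 := fun n =>
    (norm_coeff_rudinShapiro k n).1
  refine ⟨P.coeff, ?_, fun n => ?_, ?_⟩
  · rw [← norm_ne_zero_iff, hcoeff, if_pos (by positivity)]
    exact one_ne_zero
  · rw [hcoeff]; split_ifs <;> norm_num
  set S := √(2 ^ (k + 1) : ℝ)
  have hsup : ∀ t, ‖trigSum N P.coeff t‖ ≤ S := fun t => by
    rw [trigSum_coeff_eq_eval ((natDegree_rudinShapiro_fst_lt k).trans_le hkN)]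
    apply Real.le_sqrt_of_sq_le
    have := norm_eval_rudinShapiro_sq_add (Complex.norm_exp_I_mul_ofReal t) k
    nlinarith [sq_nonneg ‖(rudinShapiro k).2.eval (Complex.exp (Complex.I * t))‖]
  have hL2 : ⨍ t in -π..π, ‖trigSum N P.coeff t‖ ^ 2 = 2 ^ k := by
    rw [average_norm_trigSum_sq, ← sum_range_add_sum_Ico _ hkN,
      sum_eq_zero (s := Ico _ _) fun n hn => by
        rw [hcoeff, if_neg (not_lt.2 (mem_Ico.1 hn).1)]; norm_num,
      sum_congr rfl (fun n hn => by rw [hcoeff, if_pos (mem_range.1 hn)])]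
    simp
  have hL1 := average_sq_le_mul_LqNorm_one (trigSum_continuous N _) hsup
  rw [hL2] at hL1
  have hS : S * S = 2 * 2 ^ k := by rw [Real.mul_self_sqrt (by positivity)]; ring
  have hSpos : 0 < S := Real.sqrt_pos.2 (by positivity)
  have hNS : √N ≤ S := Real.sqrt_le_sqrt (by exact_mod_cast hNk.le)
  exact hNS.trans (le_of_mul_le_mul_left (by nlinarith) hSpos)

/-- In the region `𝒞` (`0 ≤ 1/p ≤ 1/2`, `1/2 ≤ 1/q ≤ 1`) there is an absolute constant
`c_𝒞 > 0` with `c_𝒞 N^{1/2-1/p} ≤ C_N(p→q) ≤ N^{1/2-1/p}`: the upper bound holds for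
every `a`, and the lower bound is witnessed by some nonzero `a`. -/
theorem stmt2 :
    ∃ c : ℝ, 0 < c ∧
      ∀ p q : ℝ≥0∞, p⁻¹ ≤ 1 / 2 → 1 / 2 ≤ q⁻¹ → q⁻¹ ≤ 1 →
        ∀ N : ℕ, 1 ≤ N →
          (∀ a : ℕ → ℂ, LqNorm q (trigSum N a) ≤
            (N : ℝ) ^ ((1 : ℝ) / 2 - p⁻¹.toReal) * lpNorm p N a) ∧
          (∃ a : ℕ → ℂ, (∃ n, n < N ∧ a n ≠ 0) ∧
            c * (N : ℝ) ^ ((1 : ℝ) / 2 - p⁻¹.toReal) * lpNorm p N a ≤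
              LqNorm q (trigSum N a)) := by
  refine ⟨1 / 2, by norm_num, fun p q hp hq₂ hq₁ N hN => ?_⟩
  have hp2 : 2 ≤ p := ENNReal.inv_le_inv.1 (by simpa using hp)
  have hq2 : q ≤ 2 := ENNReal.inv_le_inv.1 (by simpa using hq₂)
  have hq1 : 1 ≤ q := ENNReal.inv_le_one.1 hq₁
  refine ⟨fun a => ?_, ?_⟩
  · calc LqNorm q (trigSum N a)
        ≤ LqNorm 2 (trigSum N a) :=
          LqNorm_mono (trigSum_continuous N a) (zero_lt_one.trans_le hq1) hq2
            ENNReal.ofNat_ne_top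
      _ = lpNorm 2 N a := LqNorm_two_trigSum N a
      _ ≤ _ := lpNorm_two_le hp2 N a
  · obtain ⟨a, ha₀, ha, hflat⟩ := exists_sqrt_le_two_mul_LqNorm_one_trigSum hN
    refine ⟨a, ⟨0, hN, ha₀⟩, ?_⟩
    calc 1 / 2 * (N : ℝ) ^ ((1 : ℝ) / 2 - p⁻¹.toReal) * lpNorm p N a
        ≤ 1 / 2 * √N := by
          rw [mul_assoc]; gcongr; exact rpow_mul_lpNorm_le_sqrt p hN ha
      _ ≤ LqNorm 1 (trigSum N a) := by linarith
      _ ≤ LqNorm q (trigSum N a) :=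
          LqNorm_mono (trigSum_continuous N a) one_pos hq1
            (ne_top_of_le_ne_top ENNReal.ofNat_ne_top hq2)
end

section
/- The function q ↦ γ(q)^q = (1/π) ∫_{−∞}^{+∞} |sin(x)/x|^q dx is strictly decreasing in q on (1,∞), γ(2) = 1, and consequently γ(q) < 1 for every q > 2. -/
/-- `γ(q)^q = (1/π) ∫_{-∞}^{∞} |sin x / x|^q dx`. -/
noncomputable def gammaPow (q : ℝ) : ℝ :=
  (Real.pi)⁻¹ * ∫ x : ℝ, |Real.sin x / x| ^ q

/-- `γ(q) = ((1/π) ∫_{-∞}^{∞} |sin x / x|^q dx)^{1/q}`. -/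
noncomputable def gammaFn (q : ℝ) : ℝ := gammaPow q ^ (1 / q)

/-!
On `ℝ`, `|sin x / x| ≤ 1`, with strict inequality on `(0, π)`, so the integrands
`|sin x / x|^q` decrease strictly in `q`; they are integrable for `q > 1` since
`|sin x / x| ≤ 2 / (1 + |x|)`. For `q = 2`, write `(sin x / x)^2 = ∫₀^∞ sin² x · t e^{-xt} dt`
and exchange the integrals (Tonelli): `∫₀^∞ sin² x · t e^{-xt} dx = 2 / (t² + 4)`, whose
integral over `t > 0` is `π / 2`. Hence `γ(2)^2 = 1`, and `γ(q)^q < 1` for `q > 2`.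
-/

open MeasureTheory Set Real Filter Topology

theorem lintegral_Ioi_ofReal_of_hasDerivAt_of_nonneg {g g' : ℝ → ℝ} {a l : ℝ}
    (hderiv : ∀ x ∈ Ici a, HasDerivAt g (g' x) x) (hg'_nonneg : ∀ x ∈ Ioi a, 0 ≤ g' x)
    (hg : Tendsto g atTop (𝓝 l)) :
    ∫⁻ x in Ioi a, ENNReal.ofReal (g' x) = ENNReal.ofReal (l - g a) := by
  rw [← ofReal_integral_eq_lintegral_ofReal
    (integrableOn_Ioi_deriv_of_nonneg' hderiv hg'_nonneg hg)
    (ae_restrict_of_forall_mem measurableSet_Ioi hg'_nonneg),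
    integral_Ioi_of_hasDerivAt_of_nonneg' hderiv hg'_nonneg hg]

theorem integral_lt_integral_of_le_of_lt_on {α : Type*} [MeasurableSpace α] {μ : Measure α}
    {f g : α → ℝ} {s : Set α} (hf : Integrable f μ) (hg : Integrable g μ)
    (hle : ∀ x, f x ≤ g x) (hlt : ∀ x ∈ s, f x < g x) (hs : μ s ≠ 0) :
    ∫ x, f x ∂μ < ∫ x, g x ∂μ := by
  rw [← sub_pos, ← integral_sub hg hf,
    integral_pos_iff_support_of_nonneg (fun x ↦ sub_nonneg.2 (hle x)) (hg.sub hf)]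
  exact (pos_iff_ne_zero.2 hs).trans_le (measure_mono fun x hx ↦ (sub_pos.2 (hlt x hx)).ne')

theorem abs_sin_div_le_one (x : ℝ) : |sin x / x| ≤ 1 := by
  rw [abs_div]
  exact div_le_one_of_le₀ abs_sin_le_abs (abs_nonneg x)

theorem abs_sin_div_le_two_mul_inv (x : ℝ) : |sin x / x| ≤ 2 * (1 + |x|)⁻¹ := by
  rcases eq_or_ne x 0 with rfl | hx
  · norm_num
  rw [← div_eq_mul_inv, le_div_iff₀ (by positivity), mul_one_add, ← abs_mul,
    div_mul_cancel₀ _ hx]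
  linarith [abs_sin_div_le_one x, abs_sin_le_one x]

theorem integrable_abs_sin_div_rpow {p : ℝ} (hp : 1 < p) :
    Integrable fun x : ℝ ↦ |sin x / x| ^ p := by
  refine ((integrable_one_add_norm (E := ℝ) (μ := volume) (r := p) (by simpa using hp)).const_mul
    (2 ^ p)).mono' (by fun_prop : Measurable fun x : ℝ ↦ |sin x / x| ^ p).aestronglyMeasurable
    (ae_of_all _ fun x ↦ ?_)
  rw [norm_of_nonneg (by positivity), norm_eq_abs, rpow_neg (by positivity),
    ← inv_rpow (by positivity), ← mul_rpow zero_le_two (by positivity)]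
  exact rpow_le_rpow (abs_nonneg _) (abs_sin_div_le_two_mul_inv x) (by linarith)

theorem abs_sin_div_rpow_le_rpow {p q : ℝ} (hp : 0 ≤ p) (hpq : p ≤ q) (x : ℝ) :
    |sin x / x| ^ q ≤ |sin x / x| ^ p :=
  rpow_le_rpow_of_exponent_ge' (abs_nonneg _) (abs_sin_div_le_one x) hp hpq

theorem abs_sin_div_rpow_lt_rpow {p q : ℝ} (hpq : p < q) {x : ℝ} (hx : x ∈ Ioo 0 π) :
    |sin x / x| ^ q < |sin x / x| ^ p := by
  have hpos : 0 < sin x / x := div_pos (sin_pos_of_pos_of_lt_pi hx.1 hx.2) hx.1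
  rw [abs_of_pos hpos]
  exact rpow_lt_rpow_of_exponent_gt hpos ((div_lt_one hx.1).2 (sin_lt hx.1)) hpq

theorem integral_abs_sin_div_rpow_lt {p q : ℝ} (hp : 1 < p) (hpq : p < q) :
    ∫ x, |sin x / x| ^ q < ∫ x, |sin x / x| ^ p :=
  integral_lt_integral_of_le_of_lt_on (integrable_abs_sin_div_rpow (hp.trans hpq))
    (integrable_abs_sin_div_rpow hp) (abs_sin_div_rpow_le_rpow (by linarith) hpq.le)
    (fun _ hx ↦ abs_sin_div_rpow_lt_rpow hpq hx) (by simp [pi_pos])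

theorem lintegral_Ioi_mul_exp_neg_mul {x : ℝ} (hx : 0 < x) :
    ∫⁻ t in Ioi 0, ENNReal.ofReal (t * exp (-(x * t))) = ENNReal.ofReal (x ^ 2)⁻¹ := by
  have hderiv (t : ℝ) : HasDerivAt (fun t ↦ -((x * t + 1) * exp (-(x * t))) / x ^ 2)
      (t * exp (-(x * t))) t := by
    have hprod := (((hasDerivAt_id' t).const_mul x).add_const 1).mul
      ((hasDerivAt_id' t).const_mul x).neg.exp
    refine HasDerivAt.congr_deriv (f := fun t ↦ -((x * t + 1) * exp (-(x * t))) / x ^ 2)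
      (hprod.neg.div_const (x ^ 2)) ?_
    simp only [Pi.neg_apply]
    field_simp
    ring
  have hlim : Tendsto (fun t ↦ -((x * t + 1) * exp (-(x * t))) / x ^ 2) atTop (𝓝 0) := by
    have h := ((tendsto_pow_mul_exp_neg_atTop_nhds_zero 1).add
      (tendsto_pow_mul_exp_neg_atTop_nhds_zero 0)).comp (tendsto_id.const_mul_atTop hx)
    simpa [add_mul] using (h.neg.div_const (x ^ 2))
  rw [lintegral_Ioi_ofReal_of_hasDerivAt_of_nonneg (fun t _ ↦ hderiv t)
    (fun t ht ↦ mul_nonneg ht.out.le (exp_pos _).le) hlim]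
  simp [neg_div]

theorem abs_mul_cos_sub_mul_sin_le (a b y : ℝ) : |a * cos y - b * sin y| ≤ |a| + |b| :=
  calc _ ≤ |a * cos y| + |b * sin y| := abs_sub _ _
    _ ≤ |a| * 1 + |b| * 1 := by
      rw [abs_mul, abs_mul]
      gcongr
      exacts [abs_cos_le_one y, abs_sin_le_one y]
    _ = |a| + |b| := by ring

theorem lintegral_Ioi_sin_sq_mul_exp_neg_mul {t : ℝ} (ht : 0 < t) :
    ∫⁻ x in Ioi 0, ENNReal.ofReal (sin x ^ 2 * exp (-(t * x))) =
      ENNReal.ofReal (2 / (t * (t ^ 2 + 2 ^ 2))) := by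
  -- `sin² x = (1 - cos 2x) / 2`, and `e^{-tx} (t cos 2x - 2 sin 2x) / (t² + 4)` is a primitive
  -- of `e^{-tx} cos 2x`.
  set g : ℝ → ℝ := fun x ↦
    exp (-(t * x)) * (-(1 / (2 * t)) + (t * cos (2 * x) - 2 * sin (2 * x)) / (2 * (t ^ 2 + 2 ^ 2)))
  have hderiv (x : ℝ) : HasDerivAt g (sin x ^ 2 * exp (-(t * x))) x := by
    have h2x : HasDerivAt (fun x : ℝ ↦ 2 * x) 2 x := by
      simpa using (hasDerivAt_id' x).const_mul 2
    have hprod := (((hasDerivAt_id' x).const_mul t).neg.exp).mul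
      (((((h2x.cos).const_mul t).sub ((h2x.sin).const_mul 2)).div_const
        (2 * (t ^ 2 + 2 ^ 2))).const_add (-(1 / (2 * t))))
    refine HasDerivAt.congr_deriv (f := g) hprod ?_
    simp only [Pi.neg_apply, Pi.sub_apply]
    rw [sin_sq_eq_half_sub]
    field_simp
    ring
  have hbdd (x : ℝ) : |-(1 / (2 * t)) + (t * cos (2 * x) - 2 * sin (2 * x)) /
      (2 * (t ^ 2 + 2 ^ 2))| ≤ 1 / (2 * t) + (t + 2) / (2 * (t ^ 2 + 2 ^ 2)) := by
    have hnum := abs_mul_cos_sub_mul_sin_le t 2 (2 * x)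
    rw [abs_of_pos ht, abs_two] at hnum
    calc _ ≤ |-(1 / (2 * t))| + |(t * cos (2 * x) - 2 * sin (2 * x)) / (2 * (t ^ 2 + 2 ^ 2))| :=
          abs_add_le _ _
      _ ≤ _ := by
        rw [abs_neg, abs_of_pos (by positivity), abs_div,
          abs_of_pos (by positivity : (0 : ℝ) < 2 * (t ^ 2 + 2 ^ 2))]
        gcongr
  have hlim : Tendsto g atTop (𝓝 0) :=
    (tendsto_exp_neg_atTop_nhds_zero.comp
      (tendsto_id.const_mul_atTop ht)).zero_mul_isBoundedUnder_le (isBoundedUnder_of ⟨_, hbdd⟩)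
  rw [lintegral_Ioi_ofReal_of_hasDerivAt_of_nonneg (fun x _ ↦ hderiv x)
    (fun x _ ↦ by positivity) hlim]
  congr 1
  simp only [g, mul_zero, neg_zero, exp_zero, cos_zero, sin_zero]
  field_simp
  ring

theorem lintegral_Ioi_div_sq_add_sq {a : ℝ} (ha : 0 < a) :
    ∫⁻ t in Ioi 0, ENNReal.ofReal (a / (t ^ 2 + a ^ 2)) = ENNReal.ofReal (π / 2) := by
  have hderiv (t : ℝ) : HasDerivAt (fun t ↦ arctan (t / a)) (a / (t ^ 2 + a ^ 2)) t := by
    convert ((hasDerivAt_id' t).div_const a).arctan using 1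
    field_simp
    ring
  have hlim : Tendsto (fun t ↦ arctan (t / a)) atTop (𝓝 (π / 2)) :=
    (tendsto_arctan_atTop.mono_right nhdsWithin_le_nhds).comp
      (tendsto_id.atTop_div_const ha)
  rw [lintegral_Ioi_ofReal_of_hasDerivAt_of_nonneg (fun t _ ↦ hderiv t)
    (fun t _ ↦ by positivity) hlim]
  simp

theorem integral_Ioi_sin_div_sq : ∫ x in Ioi 0, (sin x / x) ^ 2 = π / 2 := by
  have hinner (x : ℝ) (hx : x ∈ Ioi 0) : ENNReal.ofReal ((sin x / x) ^ 2) =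
      ∫⁻ t in Ioi 0, ENNReal.ofReal (sin x ^ 2 * (t * exp (-(x * t)))) := by
    simp_rw [ENNReal.ofReal_mul (sq_nonneg (sin x))]
    rw [lintegral_const_mul _ (by fun_prop), lintegral_Ioi_mul_exp_neg_mul hx,
      ← ENNReal.ofReal_mul (sq_nonneg _), div_pow, div_eq_mul_inv]
  have hswapped (t : ℝ) (ht : t ∈ Ioi 0) :
      ∫⁻ x in Ioi 0, ENNReal.ofReal (sin x ^ 2 * (t * exp (-(x * t)))) =
        ENNReal.ofReal (2 / (t ^ 2 + 2 ^ 2)) := by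
    have hcomm (x : ℝ) : sin x ^ 2 * (t * exp (-(x * t))) = t * (sin x ^ 2 * exp (-(t * x))) := by
      rw [mul_comm x t]; ring
    simp_rw [hcomm, ENNReal.ofReal_mul ht.out.le]
    rw [lintegral_const_mul _ (by fun_prop), lintegral_Ioi_sin_sq_mul_exp_neg_mul ht,
      ← ENNReal.ofReal_mul ht.out.le]
    congr 1
    field_simp [ht.out.ne']
  have hlint : ∫⁻ x in Ioi 0, ENNReal.ofReal ((sin x / x) ^ 2) = ENNReal.ofReal (π / 2) := by
    rw [setLIntegral_congr_fun measurableSet_Ioi hinner, lintegral_lintegral_swap (by fun_prop),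
      setLIntegral_congr_fun measurableSet_Ioi hswapped, lintegral_Ioi_div_sq_add_sq two_pos]
  rw [integral_eq_lintegral_of_nonneg_ae (ae_of_all _ fun x ↦ sq_nonneg _)
    (by fun_prop : Measurable fun x : ℝ ↦ (sin x / x) ^ 2).aestronglyMeasurable, hlint,
    ENNReal.toReal_ofReal (by positivity)]

theorem integral_abs_sin_div_rpow_two : ∫ x, |sin x / x| ^ (2 : ℝ) = π := by
  have heven (x : ℝ) : |sin x / x| ^ (2 : ℝ) = (sin |x| / |x|) ^ 2 := by
    rw [rpow_two, sq_abs]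
    rcases abs_choice x with h | h <;> rw [h]
    rw [sin_neg, neg_div_neg_eq]
  simp_rw [heven]
  rw [integral_comp_abs (f := fun y ↦ (sin y / y) ^ 2), integral_Ioi_sin_div_sq]
  ring

theorem strictAntiOn_gammaPow : StrictAntiOn gammaPow (Ioi 1) := fun _ hp _ _ hpq ↦
  mul_lt_mul_of_pos_left (integral_abs_sin_div_rpow_lt hp hpq) (inv_pos.2 pi_pos)

theorem gammaPow_two : gammaPow 2 = 1 := by
  rw [gammaPow, integral_abs_sin_div_rpow_two, inv_mul_cancel₀ pi_ne_zero]

theorem gammaPow_nonneg (q : ℝ) : 0 ≤ gammaPow q :=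
  mul_nonneg (inv_nonneg.2 pi_pos.le) (integral_nonneg fun _ ↦ by positivity)

/-- The function `q ↦ γ(q)^q` is strictly decreasing on `(1,∞)`, `γ(2) = 1`, and
consequently `γ(q) < 1` for every `q > 2`. -/
theorem stmt6 :
    StrictAntiOn gammaPow (Set.Ioi (1 : ℝ)) ∧
    gammaFn 2 = 1 ∧
    ∀ q : ℝ, 2 < q → gammaFn q < 1 := by
  refine ⟨strictAntiOn_gammaPow, by rw [gammaFn, gammaPow_two, one_rpow], fun q hq ↦ ?_⟩
  have hlt : gammaPow q < gammaPow 2 :=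
    strictAntiOn_gammaPow (by norm_num : (2 : ℝ) ∈ Ioi 1) (mem_Ioi.2 (by linarith)) hq
  exact rpow_lt_one (gammaPow_nonneg q) (gammaPow_two ▸ hlt) (by positivity)
end

section
/- Let 0 < M < 2π. There exists a constant C_M, depending only on M, with the following property: for every positive integer N and every smooth real-valued function Φ on [0,N] such that Φ' is monotone and |Φ'(x)| ≤ M for all x ∈ [0,N], if S = Σ_{n=1}^{N} e^{iΦ(n)} and I = ∫_0^N e^{iΦ(x)} dx, then |S − I| ≤ C_M. -/
open Complex intervalIntegral Finset Real

lemma norm_exp_I_sub_one (θ : ℝ) : ‖Complex.exp (Complex.I * θ) - 1‖ = 2 * |Real.sin (θ/2)| := by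
  have h : Complex.exp (Complex.I * θ) - 1
      = ((Real.cos θ - 1 : ℝ) : ℂ) + ((Real.sin θ : ℝ) : ℂ) * Complex.I := by
    rw [show Complex.I * (θ:ℂ) = (θ:ℂ) * Complex.I by ring, Complex.exp_mul_I]
    push_cast
    ring_nf
  rw [h, Complex.norm_add_mul_I]
  have hc : Real.cos θ = 2 * Real.cos (θ/2)^2 - 1 := by
    rw [← Real.cos_two_mul]; ring_nf
  have hsc : Real.sin (θ/2)^2 + Real.cos (θ/2)^2 = 1 := Real.sin_sq_add_cos_sq _
  have h2 : (Real.cos θ - 1)^2 + (Real.sin θ)^2 = (2*|Real.sin (θ/2)|)^2 := by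
    have := Real.sin_sq_add_cos_sq θ
    have habs : |Real.sin (θ/2)|^2 = Real.sin (θ/2)^2 := sq_abs _
    nlinarith
  rw [h2, Real.sqrt_sq (by positivity)]

lemma norm_exp_I (θ : ℝ) : ‖Complex.exp (Complex.I * θ)‖ = 1 := by
  rw [show Complex.I * (θ:ℂ) = (θ:ℂ) * Complex.I by ring,
    Complex.norm_exp_ofReal_mul_I]

lemma norm_exp_I_sub_exp_I (a b : ℝ) :
    ‖Complex.exp (Complex.I * a) - Complex.exp (Complex.I * b)‖ ≤ |a - b| := by
  have h : Complex.exp (Complex.I * a) - Complex.exp (Complex.I * b)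
      = Complex.exp (Complex.I * b) * (Complex.exp (Complex.I * (a - b : ℝ)) - 1) := by
    rw [mul_sub, ← Complex.exp_add]; push_cast; ring_nf
  rw [h, norm_mul, norm_exp_I, one_mul, norm_exp_I_sub_one]
  have h1 : |Real.sin ((a-b)/2)| ≤ |(a-b)/2| := Real.abs_sin_le_abs
  rw [abs_div] at h1; norm_num at h1
  linarith [h1]

noncomputable def den (c : ℝ) : ℂ := ∫ t in (0:ℝ)..1, Complex.exp (Complex.I * c * t)
noncomputable def num (c : ℝ) : ℂ := ∫ t in (0:ℝ)..1, (t:ℂ) * Complex.exp (Complex.I * c * t)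
noncomputable def gfun (c : ℝ) : ℂ := num c / den c

lemma den_zero : den 0 = 1 := by simp [den]

lemma den_eq {c : ℝ} (hc : c ≠ 0) :
    den c = (Complex.exp (Complex.I * c) - 1) / (Complex.I * c) := by
  have hc' : (Complex.I * c) ≠ 0 := by
    simp [Complex.ext_iff, Complex.I_ne_zero, hc]
  calc den c = ∫ t in (0:ℝ)..1, Complex.exp ((Complex.I * c) * t) := by
        simp [den]
    _ = (Complex.exp (Complex.I * c * 1) - Complex.exp (Complex.I * c * 0)) / (Complex.I * c) :=
        integral_exp_mul_complex hc'
    _ = (Complex.exp (Complex.I * c) - 1) / (Complex.I * c) := by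
        norm_num

lemma num_eq {c : ℝ} (hc : c ≠ 0) :
    num c = Complex.exp (Complex.I * c) / (Complex.I * c) - den c / (Complex.I * c) := by
  have hc' : (Complex.I * (c:ℂ)) ≠ 0 := by
    simp [Complex.ext_iff, Complex.I_ne_zero, hc]
  set k : ℂ := Complex.I * c with hk
  have D : ∀ x : ℝ, HasDerivAt (fun y : ℝ => Complex.exp (k * y) / k) (Complex.exp (k * x)) x := by
    intro x
    rw [← mul_div_cancel_right₀ (Complex.exp (k * x)) hc']
    apply ((Complex.hasDerivAt_exp _).comp x _).div_const k
    simpa only [mul_one, id_eq] using ((hasDerivAt_id (x : ℂ)).const_mul _).comp_ofReal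
  have DU : ∀ x : ℝ, HasDerivAt (fun y : ℝ => (y:ℂ)) 1 x := by
    intro x
    simpa using (hasDerivAt_id (x:ℂ)).comp_ofReal
  have H := intervalIntegral.integral_mul_deriv_eq_deriv_mul
    (u := fun y : ℝ => (y:ℂ)) (u' := fun _ => (1:ℂ))
    (v := fun y : ℝ => Complex.exp (k * y) / k) (v' := fun y : ℝ => Complex.exp (k * y))
    (a := (0:ℝ)) (b := (1:ℝ))
    (fun x _ => DU x) (fun x _ => D x)
    (intervalIntegrable_const)
    (by apply Continuous.intervalIntegrable; fun_prop)
  have hnum : num c = ∫ t in (0:ℝ)..1, (t:ℂ) * Complex.exp (k * t) := by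
    simp [num, hk, mul_assoc]
  rw [hnum, H]
  have hden : den c = ∫ t in (0:ℝ)..1, Complex.exp (k * t) := by
    simp [den, hk, mul_assoc]
  simp only [one_mul]
  rw [intervalIntegral.integral_div, ← hden]
  push_cast
  ring_nf

lemma key_identity {c : ℝ} (hden : den c ≠ 0) :
    Complex.exp (Complex.I * c) - den c = (Complex.exp (Complex.I * c) - 1) * gfun c := by
  rcases eq_or_ne c 0 with rfl | hc
  · simp [den_zero]
  · have hc' : (Complex.I * (c:ℂ)) ≠ 0 := by
      simp [Complex.ext_iff, Complex.I_ne_zero, hc]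
    rw [den_eq hc] at hden
    have he1 : Complex.exp (Complex.I*c) - 1 ≠ 0 := by
      intro h; exact hden (by rw [h]; simp)
    have hcC : (c:ℂ) ≠ 0 := by exact_mod_cast hc
    rw [gfun, num_eq hc, den_eq hc]
    field_simp

lemma norm_exp_I_mul_mul (c t : ℝ) : ‖Complex.exp (Complex.I * c * t)‖ = 1 := by
  have h : Complex.I * (c:ℂ) * (t:ℂ) = Complex.I * ((c*t : ℝ):ℂ) := by push_cast; ring
  rw [h, norm_exp_I]

lemma norm_exp_diff (c c' t : ℝ) :
    ‖Complex.exp (Complex.I * c * t) - Complex.exp (Complex.I * c' * t)‖ ≤ |c - c'| * |t| := by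
  have h1 : Complex.I * (c:ℂ) * (t:ℂ) = Complex.I * ((c*t : ℝ):ℂ) := by push_cast; ring
  have h2 : Complex.I * (c':ℂ) * (t:ℂ) = Complex.I * ((c'*t : ℝ):ℂ) := by push_cast; ring
  rw [h1, h2]
  calc ‖Complex.exp (Complex.I * ((c*t:ℝ):ℂ)) - Complex.exp (Complex.I * ((c'*t:ℝ):ℂ))‖
      ≤ |c*t - c'*t| := norm_exp_I_sub_exp_I _ _
    _ = |c - c'| * |t| := by rw [← sub_mul, abs_mul]

lemma norm_num_le (c : ℝ) : ‖num c‖ ≤ 1/2 := by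
  calc ‖num c‖ ≤ |∫ t in (0:ℝ)..1, t| := by
        apply intervalIntegral.norm_integral_le_abs_of_norm_le
        · filter_upwards [MeasureTheory.ae_restrict_mem measurableSet_uIoc] with t ht
          rw [Set.uIoc_of_le (by norm_num : (0:ℝ) ≤ 1)] at ht
          rw [norm_mul, norm_exp_I_mul_mul, mul_one, Complex.norm_real, Real.norm_eq_abs,
            _root_.abs_of_nonneg ht.1.le]
        · apply Continuous.intervalIntegrable; fun_prop
    _ = 1/2 := by rw [integral_id]; norm_num

lemma num_lip (c c' : ℝ) : ‖num c - num c'‖ ≤ |c - c'| / 3 := by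
  have hi : num c - num c'
      = ∫ t in (0:ℝ)..1, ((t:ℂ) * Complex.exp (Complex.I * c * t)
        - (t:ℂ) * Complex.exp (Complex.I * c' * t)) := by
    unfold num
    rw [← intervalIntegral.integral_sub] <;>
      first
        | rfl
        | (apply Continuous.intervalIntegrable; fun_prop)
  rw [hi]
  calc ‖∫ t in (0:ℝ)..1, ((t:ℂ) * Complex.exp (Complex.I * c * t)
        - (t:ℂ) * Complex.exp (Complex.I * c' * t))‖
      ≤ |∫ t in (0:ℝ)..1, |c - c'| * t^2| := by
        apply intervalIntegral.norm_integral_le_abs_of_norm_le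
        · filter_upwards [MeasureTheory.ae_restrict_mem measurableSet_uIoc] with t ht
          rw [Set.uIoc_of_le (by norm_num : (0:ℝ) ≤ 1)] at ht
          rw [← mul_sub, norm_mul, Complex.norm_real, Real.norm_eq_abs,
            _root_.abs_of_nonneg ht.1.le]
          calc t * ‖Complex.exp (Complex.I * c * t) - Complex.exp (Complex.I * c' * t)‖
              ≤ t * (|c - c'| * |t|) :=
                mul_le_mul_of_nonneg_left (norm_exp_diff c c' t) ht.1.le
            _ = |c - c'| * t^2 := by rw [_root_.abs_of_nonneg ht.1.le]; ring
        · apply Continuous.intervalIntegrable; fun_prop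
    _ = |c - c'| / 3 := by
        rw [intervalIntegral.integral_const_mul, abs_mul, _root_.abs_abs,
          show (∫ t in (0:ℝ)..1, t^2 : ℝ) = 1/3 by norm_num [integral_pow],
          show |(1:ℝ)/3| = 1/3 by norm_num]
        ring

lemma den_lip (c c' : ℝ) : ‖den c - den c'‖ ≤ |c - c'| / 2 := by
  have hi : den c - den c'
      = ∫ t in (0:ℝ)..1, (Complex.exp (Complex.I * c * t)
        - Complex.exp (Complex.I * c' * t)) := by
    unfold den
    rw [← intervalIntegral.integral_sub] <;>
      first
        | rfl
        | (apply Continuous.intervalIntegrable; fun_prop)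
  rw [hi]
  calc ‖∫ t in (0:ℝ)..1, (Complex.exp (Complex.I * c * t)
        - Complex.exp (Complex.I * c' * t))‖
      ≤ |∫ t in (0:ℝ)..1, |c - c'| * t| := by
        apply intervalIntegral.norm_integral_le_abs_of_norm_le
        · filter_upwards [MeasureTheory.ae_restrict_mem measurableSet_uIoc] with t ht
          rw [Set.uIoc_of_le (by norm_num : (0:ℝ) ≤ 1)] at ht
          calc ‖Complex.exp (Complex.I * c * t) - Complex.exp (Complex.I * c' * t)‖
              ≤ |c - c'| * |t| := norm_exp_diff c c' t
            _ = |c - c'| * t := by rw [_root_.abs_of_nonneg ht.1.le]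
        · apply Continuous.intervalIntegrable; fun_prop
    _ = |c - c'| / 2 := by
        rw [intervalIntegral.integral_const_mul, abs_mul, _root_.abs_abs,
          show (∫ t in (0:ℝ)..1, t : ℝ) = 1/2 by norm_num [integral_id],
          show |(1:ℝ)/2| = 1/2 by norm_num]
        ring
lemma den_lower {M : ℝ} (hM0 : 0 < M) (hM : M < 2*Real.pi) {c : ℝ} (hc : |c| ≤ M) :
    2 * Real.sin (M/2) / M ≤ ‖den c‖ := by
  have hs : 0 < Real.sin (M/2) := Real.sin_pos_of_pos_of_lt_pi (by linarith) (by linarith)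
  rcases eq_or_ne c 0 with rfl | hc0
  · rw [den_zero]
    have h1 : Real.sin (M/2) ≤ M/2 := Real.sin_le (by linarith)
    have : 2 * Real.sin (M/2) / M ≤ 1 := by
      rw [div_le_one hM0]; linarith
    simpa using this
  · have hcpos : 0 < |c| := abs_pos.mpr hc0
    have habs : |Real.sin (c/2)| = Real.sin (|c|/2) := by
      rcases le_or_gt 0 c with h | h
      · rw [_root_.abs_of_nonneg h] at hc ⊢
        exact _root_.abs_of_nonneg
          (Real.sin_nonneg_of_nonneg_of_le_pi (by linarith) (by linarith))
      · rw [_root_.abs_of_neg h] at hc ⊢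
        rw [show -c/2 = -(c/2) by ring, Real.sin_neg]
        exact abs_of_nonpos
          (Real.sin_nonpos_of_nonpos_of_neg_pi_le (by linarith) (by linarith))
    have hnorm : ‖den c‖ = 2 * Real.sin (|c|/2) / |c| := by
      rw [den_eq hc0, norm_div, norm_exp_I_sub_one, norm_mul, Complex.norm_I, one_mul,
        Complex.norm_real, Real.norm_eq_abs, habs]
    rw [hnorm]
    -- concavity: sin (|c|/2) ≥ (|c|/M) * sin (M/2)
    have hconc := strictConcaveOn_sin_Icc.concaveOn
    have hx : (M/2) ∈ Set.Icc (0:ℝ) Real.pi := ⟨by linarith, by linarith⟩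
    have hy : (0:ℝ) ∈ Set.Icc (0:ℝ) Real.pi := ⟨le_rfl, Real.pi_pos.le⟩
    have ha : 0 ≤ |c|/M := by positivity
    have hb : 0 ≤ 1 - |c|/M := by
      have : |c|/M ≤ 1 := by rw [div_le_one hM0]; exact hc
      linarith
    have hab : |c|/M + (1 - |c|/M) = 1 := by ring
    have hkey := hconc.2 hx hy ha hb (by linarith)
    simp only [smul_eq_mul, mul_zero, add_zero, Real.sin_zero] at hkey
    have hxx : |c|/M * (M/2) = |c|/2 := by field_simp
    rw [hxx] at hkey
    rw [div_le_div_iff₀ hM0 hcpos]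
    calc 2 * Real.sin (M/2) * |c| = (|c|/M * Real.sin (M/2)) * (2*M) := by field_simp
      _ ≤ Real.sin (|c|/2) * (2*M) := by
          apply mul_le_mul_of_nonneg_right _ (by linarith)
          linarith [hkey]
      _ = 2 * Real.sin (|c|/2) * M := by ring

lemma den_ne_zero {M : ℝ} (hM0 : 0 < M) (hM : M < 2*Real.pi) {c : ℝ} (hc : |c| ≤ M) :
    den c ≠ 0 := by
  have h := den_lower hM0 hM hc
  have hs : 0 < Real.sin (M/2) := Real.sin_pos_of_pos_of_lt_pi (by linarith) (by linarith)
  intro h0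
  rw [h0, norm_zero] at h
  have : 0 < 2 * Real.sin (M/2) / M := by positivity
  linarith

lemma gfun_bound {M : ℝ} (hM0 : 0 < M) (hM : M < 2*Real.pi) {c : ℝ} (hc : |c| ≤ M) :
    ‖gfun c‖ ≤ (1/2) / (2 * Real.sin (M/2) / M) := by
  have hs : 0 < Real.sin (M/2) := Real.sin_pos_of_pos_of_lt_pi (by linarith) (by linarith)
  have hε : 0 < 2 * Real.sin (M/2) / M := by positivity
  rw [gfun, norm_div]
  exact div_le_div₀ (by norm_num) (norm_num_le c) hε (den_lower hM0 hM hc)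

lemma gfun_lip {M : ℝ} (hM0 : 0 < M) (hM : M < 2*Real.pi) {c c' : ℝ}
    (hc : |c| ≤ M) (hc' : |c'| ≤ M) :
    ‖gfun c - gfun c'‖ ≤
      (1 / (3 * (2 * Real.sin (M/2) / M)) + 1 / (4 * (2 * Real.sin (M/2) / M)^2)) * |c - c'| := by
  set ε := 2 * Real.sin (M/2) / M with hε
  have hs : 0 < Real.sin (M/2) := Real.sin_pos_of_pos_of_lt_pi (by linarith) (by linarith)
  have hεpos : 0 < ε := by rw [hε]; positivity
  have hd : den c ≠ 0 := den_ne_zero hM0 hM hc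
  have hd' : den c' ≠ 0 := den_ne_zero hM0 hM hc'
  have hl : ε ≤ ‖den c‖ := den_lower hM0 hM hc
  have hl' : ε ≤ ‖den c'‖ := den_lower hM0 hM hc'
  have hsplit : gfun c - gfun c'
      = (num c - num c')/den c + num c' * (den c' - den c)/(den c * den c') := by
    unfold gfun; field_simp; ring
  rw [hsplit]
  calc ‖(num c - num c')/den c + num c' * (den c' - den c)/(den c * den c')‖
      ≤ ‖(num c - num c')/den c‖ + ‖num c' * (den c' - den c)/(den c * den c')‖ :=
        norm_add_le _ _
    _ ≤ (|c - c'|/3)/ε + ((1/2) * (|c - c'|/2))/(ε * ε) := by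
        apply add_le_add
        · rw [norm_div]
          exact div_le_div₀ (by positivity) (num_lip c c') hεpos hl
        · rw [norm_div, norm_mul, norm_mul]
          apply div_le_div₀ (by positivity)
          · apply mul_le_mul (norm_num_le c') _ (norm_nonneg _) (by norm_num)
            have := den_lip c' c
            rwa [abs_sub_comm] at this
          · positivity
          · exact mul_le_mul hl hl' hεpos.le (norm_nonneg _)
    _ = (1 / (3 * ε) + 1 / (4 * ε^2)) * |c - c'| := by
        field_simp
        ring

lemma slope_est {Φ : ℝ → ℝ} (hΦ : ContDiff ℝ (⊤ : ℕ∞) Φ) {a : ℝ}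
    (hmono : MonotoneOn (deriv Φ) (Set.Icc a (a+1))) :
    deriv Φ a ≤ Φ (a+1) - Φ a ∧ Φ (a+1) - Φ a ≤ deriv Φ (a+1) := by
  have hdiff : Differentiable ℝ Φ := hΦ.differentiable (by simp)
  have hcont : Continuous (deriv Φ) := hΦ.continuous_deriv (by simp)
  have hle : a ≤ a + 1 := by linarith
  have hftc : ∫ t in a..(a+1), deriv Φ t = Φ (a+1) - Φ a :=
    intervalIntegral.integral_deriv_eq_sub (fun x _ => hdiff x)
      (hcont.intervalIntegrable _ _)
  constructor
  · have h1 : ∫ t in a..(a+1), deriv Φ a ≤ ∫ t in a..(a+1), deriv Φ t := by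
      apply intervalIntegral.integral_mono_on hle intervalIntegrable_const
        (hcont.intervalIntegrable _ _)
      intro x hx
      exact hmono (Set.left_mem_Icc.mpr hle) hx hx.1
    rw [hftc] at h1
    simpa using h1
  · have h1 : ∫ t in a..(a+1), deriv Φ t ≤ ∫ t in a..(a+1), deriv Φ (a+1) := by
      apply intervalIntegral.integral_mono_on hle (hcont.intervalIntegrable _ _)
        intervalIntegrable_const
      intro x hx
      exact hmono hx (Set.right_mem_Icc.mpr hle) hx.2
    rw [hftc] at h1
    simpa using h1

lemma step_est {M : ℝ} (hM0 : 0 < M) (hM : M < 2*Real.pi) {Φ : ℝ → ℝ} (hΦ : ContDiff ℝ (⊤ : ℕ∞) Φ)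
    {a : ℝ} (hmono : MonotoneOn (deriv Φ) (Set.Icc a (a+1)))
    (hb : ∀ x ∈ Set.Icc a (a+1), |deriv Φ x| ≤ M) :
    ‖(Complex.exp (Complex.I * (Φ (a+1) : ℂ))
        - ∫ x in a..(a+1), Complex.exp (Complex.I * (Φ x : ℂ)))
      - (Complex.exp (Complex.I * (Φ (a+1) : ℂ)) - Complex.exp (Complex.I * (Φ a : ℂ)))
          * gfun (Φ (a+1) - Φ a)‖
      ≤ deriv Φ (a+1) - deriv Φ a := by
  have hdiff : Differentiable ℝ Φ := hΦ.differentiable (by simp)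
  have hcont : Continuous (deriv Φ) := hΦ.continuous_deriv (by simp)
  have hle : a ≤ a + 1 := by linarith
  have hslope := slope_est hΦ hmono
  set c : ℝ := Φ (a+1) - Φ a with hc
  have hmem_a : a ∈ Set.Icc a (a+1) := Set.left_mem_Icc.mpr hle
  have hmem_b : a+1 ∈ Set.Icc a (a+1) := Set.right_mem_Icc.mpr hle
  have hcM : |c| ≤ M := by
    have h1 := abs_le.1 (hb a hmem_a)
    have h2 := abs_le.1 (hb (a+1) hmem_b)
    exact abs_le.2 ⟨by linarith [hslope.1], by linarith [hslope.2]⟩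
  have hdenne : den c ≠ 0 := den_ne_zero hM0 hM hcM
  set v : ℝ := deriv Φ (a+1) - deriv Φ a with hv
  -- the linear model
  set L : ℝ → ℂ := fun x => Complex.exp (Complex.I * ((Φ a + c*(x-a) : ℝ) : ℂ)) with hL
  have hLcont : Continuous L := by fun_prop
  have hFcont : Continuous (fun x : ℝ => Complex.exp (Complex.I * (Φ x : ℂ))) := by
    have := hΦ.continuous
    fun_prop
  have hlin : (∫ x in a..(a+1), L x) = Complex.exp (Complex.I * (Φ a : ℂ)) * den c := by
    have h1 : (∫ x in a..(a+1), L x)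
        = ∫ x in a..(a+1), Complex.exp (Complex.I * (Φ a : ℂ))
            * Complex.exp (Complex.I * (c:ℂ) * ((x - a : ℝ) : ℂ)) := by
      apply intervalIntegral.integral_congr
      intro x _
      show Complex.exp (Complex.I * ((Φ a + c*(x-a) : ℝ) : ℂ))
          = Complex.exp (Complex.I * (Φ a : ℂ)) * Complex.exp (Complex.I * (c:ℂ) * ((x - a : ℝ) : ℂ))
      rw [← Complex.exp_add]
      push_cast
      ring_nf
    rw [h1, intervalIntegral.integral_const_mul]
    congr 1
    have h2 : (∫ x in a..(a+1), Complex.exp (Complex.I * (c:ℂ) * ((x - a : ℝ) : ℂ)))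
        = ∫ u in (a-a)..(a+1-a), Complex.exp (Complex.I * (c:ℂ) * (u : ℂ)) :=
      intervalIntegral.integral_comp_sub_right
        (fun u : ℝ => Complex.exp (Complex.I * (c:ℂ) * (u : ℂ))) a
    rw [h2, show a - a = (0:ℝ) by ring, show a + 1 - a = (1:ℝ) by ring]
    rfl
  -- phase comparison
  have hvnn : 0 ≤ v := by
    have := hmono hmem_a hmem_b hle
    rw [hv]; linarith
  have hphase : ∀ x ∈ Set.Icc a (a+1), |(Φ a + c*(x-a)) - Φ x| ≤ v := by
    intro x hx
    have hax : a ≤ x := hx.1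
    have hxb : x ≤ a + 1 := hx.2
    have hftc : ∫ t in a..x, deriv Φ t = Φ x - Φ a :=
      intervalIntegral.integral_deriv_eq_sub (fun t _ => hdiff t)
        (hcont.intervalIntegrable _ _)
    have hdiffint : (∫ t in a..x, (deriv Φ t - c)) = Φ x - Φ a - (x - a) * c := by
      rw [intervalIntegral.integral_sub (hcont.intervalIntegrable _ _)
        intervalIntegrable_const, hftc, intervalIntegral.integral_const, smul_eq_mul]
    have hbd : ‖∫ t in a..x, (deriv Φ t - c)‖ ≤ v * |x - a| := by
      apply intervalIntegral.norm_integral_le_of_norm_le_const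
      intro t ht
      rw [Set.uIoc_of_le hax] at ht
      have htmem : t ∈ Set.Icc a (a+1) := ⟨ht.1.le, le_trans ht.2 hxb⟩
      have hm1 : deriv Φ a ≤ deriv Φ t := hmono hmem_a htmem (htmem.1)
      have hm2 : deriv Φ t ≤ deriv Φ (a+1) := hmono htmem hmem_b (htmem.2)
      rw [Real.norm_eq_abs]
      exact abs_le.2 ⟨by rw [hv]; linarith [hslope.2], by rw [hv]; linarith [hslope.1]⟩
    rw [hdiffint] at hbd
    rw [Real.norm_eq_abs] at hbd
    have habs : |x - a| ≤ 1 := by rw [_root_.abs_of_nonneg (by linarith)]; linarith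
    calc |(Φ a + c*(x-a)) - Φ x| = |Φ x - Φ a - (x-a)*c| := by
          rw [← abs_neg]; congr 1; ring
      _ ≤ v * |x - a| := hbd
      _ ≤ v * 1 := by exact mul_le_mul_of_nonneg_left habs hvnn
      _ = v := mul_one v
  -- exact identity for the linear part
  have hexp_add : Complex.exp (Complex.I * (Φ (a+1) : ℂ))
      = Complex.exp (Complex.I * (Φ a : ℂ)) * Complex.exp (Complex.I * (c:ℂ)) := by
    rw [← Complex.exp_add]
    congr 1
    push_cast [hc]
    ring
  have hlinpart : Complex.exp (Complex.I * (Φ (a+1) : ℂ)) - (∫ x in a..(a+1), L x)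
      = (Complex.exp (Complex.I * (Φ (a+1) : ℂ)) - Complex.exp (Complex.I * (Φ a : ℂ)))
          * gfun c := by
    rw [hlin, hexp_add, ← mul_sub, key_identity hdenne, ← mul_assoc]
    congr 1
    rw [mul_sub, mul_one]
  -- put together
  have hsplit : (Complex.exp (Complex.I * (Φ (a+1) : ℂ))
        - ∫ x in a..(a+1), Complex.exp (Complex.I * (Φ x : ℂ)))
      - (Complex.exp (Complex.I * (Φ (a+1) : ℂ)) - Complex.exp (Complex.I * (Φ a : ℂ)))
          * gfun c
      = ∫ x in a..(a+1), (L x - Complex.exp (Complex.I * (Φ x : ℂ))) := by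
    rw [intervalIntegral.integral_sub (hLcont.intervalIntegrable _ _)
      (hFcont.intervalIntegrable _ _), ← hlinpart, hlin]
    ring
  rw [hsplit]
  have := intervalIntegral.norm_integral_le_of_norm_le_const (C := v)
    (f := fun x => L x - Complex.exp (Complex.I * (Φ x : ℂ))) (a := a) (b := a+1) ?_
  · calc ‖∫ x in a..(a+1), (L x - Complex.exp (Complex.I * (Φ x : ℂ)))‖ ≤ v * |a + 1 - a| := this
      _ = v := by rw [show a+1-a = (1:ℝ) by ring, abs_one, mul_one]
  · intro x hx
    rw [Set.uIoc_of_le hle] at hx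
    have hxmem : x ∈ Set.Icc a (a+1) := ⟨hx.1.le, hx.2⟩
    calc ‖L x - Complex.exp (Complex.I * (Φ x : ℂ))‖
        ≤ |(Φ a + c*(x-a)) - Φ x| := norm_exp_I_sub_exp_I _ _
      _ ≤ v := hphase x hxmem

lemma mono_case {M : ℝ} (hM0 : 0 < M) (hM : M < 2 * Real.pi) (N : ℕ) (hN : 1 ≤ N)
    (Φ : ℝ → ℝ) (hΦ : ContDiff ℝ (⊤ : ℕ∞) Φ)
    (hmono : MonotoneOn (deriv Φ) (Set.Icc 0 (N : ℝ)))
    (hb : ∀ x ∈ Set.Icc (0 : ℝ) (N : ℝ), |deriv Φ x| ≤ M) :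
    ‖(∑ n ∈ Finset.Icc 1 N, Complex.exp (Complex.I * (Φ n : ℂ))) -
        ∫ x in (0 : ℝ)..(N : ℝ), Complex.exp (Complex.I * (Φ x : ℂ))‖ ≤
      2*M + 2*((1/2)/(2*Real.sin (M/2)/M))
        + 4*(1/(3*(2*Real.sin (M/2)/M)) + 1/(4*(2*Real.sin (M/2)/M)^2))*M := by
  have hFcont : Continuous (fun x : ℝ => Complex.exp (Complex.I * (Φ x : ℂ))) := by
    have := hΦ.continuous
    fun_prop
  set F : ℝ → ℂ := fun x => Complex.exp (Complex.I * (Φ x : ℂ)) with hF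
  set cc : ℕ → ℝ := fun i => Φ ((i:ℝ)+1) - Φ (i:ℝ) with hcc
  set w : ℕ → ℂ := fun i => gfun (cc i) with hw
  set d : ℕ → ℂ := fun i => F ((i:ℝ)+1) - F (i:ℝ) with hd
  have hI : ∑ i ∈ range N, (∫ x in (i:ℝ)..((i:ℝ)+1), F x) = ∫ x in (0:ℝ)..(N:ℝ), F x := by
    have h := intervalIntegral.sum_integral_adjacent_intervals (f := F)
      (μ := MeasureTheory.volume) (a := fun i : ℕ => (i:ℝ)) (n := N)
      (fun k _ => hFcont.intervalIntegrable _ _)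
    push_cast at h
    exact h
  have hS : ∑ n ∈ Finset.Icc 1 N, F (n:ℝ) = ∑ i ∈ range N, F ((i:ℝ)+1) := by
    rw [← Finset.Ico_add_one_right_eq_Icc, Finset.sum_Ico_eq_sum_range]
    apply Finset.sum_congr (by norm_num)
    intro i _
    congr 2
    push_cast
    ring
  have hsub : ∀ i : ℕ, i < N → Set.Icc ((i:ℝ)) ((i:ℝ)+1) ⊆ Set.Icc (0:ℝ) (N:ℝ) := by
    intro i hi x hx
    have h1 : (0:ℝ) ≤ (i:ℝ) := Nat.cast_nonneg i
    have h2 : (i:ℝ)+1 ≤ (N:ℝ) := by exact_mod_cast Nat.succ_le_of_lt hi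
    exact ⟨by linarith [hx.1], by linarith [hx.2]⟩
  have hstep : ∀ i ∈ range N, ‖(F ((i:ℝ)+1) - ∫ x in (i:ℝ)..((i:ℝ)+1), F x) - w i * d i‖
      ≤ deriv Φ ((i:ℝ)+1) - deriv Φ (i:ℝ) := by
    intro i hi
    have hi' := Finset.mem_range.1 hi
    have h := step_est hM0 hM hΦ (hmono.mono (hsub i hi'))
      (fun x hx => hb x (hsub i hi' hx))
    calc ‖(F ((i:ℝ)+1) - ∫ x in (i:ℝ)..((i:ℝ)+1), F x) - w i * d i‖
        = ‖(F ((i:ℝ)+1) - ∫ x in (i:ℝ)..((i:ℝ)+1), F x) - d i * gfun (cc i)‖ := by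
          rw [mul_comm]
      _ ≤ _ := h
  have hslope' : ∀ i : ℕ, i < N → deriv Φ (i:ℝ) ≤ cc i ∧ cc i ≤ deriv Φ ((i:ℝ)+1) :=
    fun i hi => slope_est hΦ (hmono.mono (hsub i hi))
  have hccM : ∀ i : ℕ, i < N → |cc i| ≤ M := by
    intro i hi
    have h0 : (i:ℝ) ∈ Set.Icc (0:ℝ) (N:ℝ) := hsub i hi ⟨le_rfl, by linarith⟩
    have h1 : (i:ℝ)+1 ∈ Set.Icc (0:ℝ) (N:ℝ) := hsub i hi ⟨by linarith, le_rfl⟩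
    have ha := abs_le.1 (hb _ h0)
    have hbb := abs_le.1 (hb _ h1)
    exact abs_le.2 ⟨by linarith [(hslope' i hi).1], by linarith [(hslope' i hi).2]⟩
  have hccmono : ∀ i : ℕ, i < N - 1 → cc i ≤ cc (i+1) := by
    intro i hi
    have hi1 : i < N := by omega
    have hi2 : i + 1 < N := by omega
    have h1 := (hslope' i hi1).2
    have h2 := (hslope' (i+1) hi2).1
    push_cast at h2
    linarith
  -- main splitting
  have hmain : (∑ n ∈ Finset.Icc 1 N, F (n:ℝ)) - (∫ x in (0:ℝ)..(N:ℝ), F x)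
      = (∑ i ∈ range N, ((F ((i:ℝ)+1) - ∫ x in (i:ℝ)..((i:ℝ)+1), F x) - w i * d i))
        + ∑ i ∈ range N, w i • d i := by
    rw [hS, ← hI, ← Finset.sum_sub_distrib, ← Finset.sum_add_distrib]
    apply Finset.sum_congr rfl
    intro i _
    simp only [smul_eq_mul]
    ring
  have hgoal : (∑ n ∈ Finset.Icc 1 N, Complex.exp (Complex.I * (Φ n : ℂ))) -
        (∫ x in (0 : ℝ)..(N : ℝ), Complex.exp (Complex.I * (Φ x : ℂ)))
      = (∑ n ∈ Finset.Icc 1 N, F (n:ℝ)) - (∫ x in (0:ℝ)..(N:ℝ), F x) := rfl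
  rw [hgoal, hmain]
  -- part A bound
  have hA : ‖∑ i ∈ range N, ((F ((i:ℝ)+1) - ∫ x in (i:ℝ)..((i:ℝ)+1), F x) - w i * d i)‖
      ≤ 2*M := by
    calc ‖∑ i ∈ range N, ((F ((i:ℝ)+1) - ∫ x in (i:ℝ)..((i:ℝ)+1), F x) - w i * d i)‖
        ≤ ∑ i ∈ range N, ‖(F ((i:ℝ)+1) - ∫ x in (i:ℝ)..((i:ℝ)+1), F x) - w i * d i‖ :=
          norm_sum_le _ _
      _ ≤ ∑ i ∈ range N, (deriv Φ ((i:ℝ)+1) - deriv Φ (i:ℝ)) :=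
          Finset.sum_le_sum hstep
      _ = deriv Φ (N:ℝ) - deriv Φ (0:ℝ) := by
          have h := Finset.sum_range_sub (f := fun k : ℕ => deriv Φ (k:ℝ)) N
          push_cast at h
          convert h using 1
      _ ≤ 2*M := by
          have hN0 : (0:ℝ) ≤ (N:ℝ) := Nat.cast_nonneg N
          have h0 := abs_le.1 (hb 0 ⟨le_rfl, hN0⟩)
          have h1 := abs_le.1 (hb (N:ℝ) ⟨hN0, le_rfl⟩)
          push_cast at h0 h1 ⊢
          linarith
  -- partial sums of d
  have hG : ∀ k : ℕ, (∑ j ∈ range k, d j) = F (k:ℝ) - F (0:ℝ) := by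
    intro k
    have h := Finset.sum_range_sub (f := fun j : ℕ => F (j:ℝ)) k
    push_cast at h
    convert h using 1
  have hnormF : ∀ x : ℝ, ‖F x‖ = 1 := fun x => norm_exp_I (Φ x)
  have hnormG : ∀ k : ℕ, ‖∑ j ∈ range k, d j‖ ≤ 2 := by
    intro k
    rw [hG k]
    calc ‖F (k:ℝ) - F (0:ℝ)‖ ≤ ‖F (k:ℝ)‖ + ‖F (0:ℝ)‖ := norm_sub_le _ _
      _ = 2 := by rw [hnormF, hnormF]; norm_num
  -- Abel summation bound
  have habel := Finset.sum_range_by_parts w d N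
  have hB : ‖∑ i ∈ range N, w i • d i‖
      ≤ 2*((1/2)/(2*Real.sin (M/2)/M))
        + 4*(1/(3*(2*Real.sin (M/2)/M)) + 1/(4*(2*Real.sin (M/2)/M)^2))*M := by
    have hs : 0 < Real.sin (M/2) := Real.sin_pos_of_pos_of_lt_pi (by linarith) (by linarith)
    have hεpos : 0 < 2*Real.sin (M/2)/M := by positivity
    have hL0 : 0 ≤ 1/(3*(2*Real.sin (M/2)/M)) + 1/(4*(2*Real.sin (M/2)/M)^2) := by positivity
    rw [habel]
    have hterm1 : ‖w (N-1) • ∑ j ∈ range N, d j‖ ≤ ((1/2)/(2*Real.sin (M/2)/M)) * 2 := by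
      rw [norm_smul]
      exact mul_le_mul (gfun_bound hM0 hM (hccM (N-1) (by omega))) (hnormG N)
        (norm_nonneg _) (by positivity)
    have hterm2 : ‖∑ i ∈ range (N-1), (w (i+1) - w i) • (∑ j ∈ range (i+1), d j)‖
        ≤ ∑ i ∈ range (N-1),
            ((1/(3*(2*Real.sin (M/2)/M)) + 1/(4*(2*Real.sin (M/2)/M)^2)) * (cc (i+1) - cc i)) * 2 := by
      calc ‖∑ i ∈ range (N-1), (w (i+1) - w i) • (∑ j ∈ range (i+1), d j)‖
          ≤ ∑ i ∈ range (N-1), ‖(w (i+1) - w i) • (∑ j ∈ range (i+1), d j)‖ := norm_sum_le _ _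
        _ ≤ _ := by
            apply Finset.sum_le_sum
            intro i hi
            have hi' := Finset.mem_range.1 hi
            rw [norm_smul]
            have hlip : ‖w (i+1) - w i‖
                ≤ (1/(3*(2*Real.sin (M/2)/M)) + 1/(4*(2*Real.sin (M/2)/M)^2)) * (cc (i+1) - cc i) := by
              calc ‖w (i+1) - w i‖
                  ≤ (1/(3*(2*Real.sin (M/2)/M)) + 1/(4*(2*Real.sin (M/2)/M)^2))
                      * |cc (i+1) - cc i| :=
                    gfun_lip hM0 hM (hccM (i+1) (by omega)) (hccM i (by omega))
                _ = _ := by rw [_root_.abs_of_nonneg (by linarith [hccmono i hi'])]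
            exact mul_le_mul hlip (hnormG (i+1)) (norm_nonneg _)
              (le_trans (norm_nonneg _) hlip)
    have htel : ∑ i ∈ range (N-1), (cc (i+1) - cc i) = cc (N-1) - cc 0 :=
      Finset.sum_range_sub (fun i => cc i) (N-1)
    have htel2 : ∑ i ∈ range (N-1),
          ((1/(3*(2*Real.sin (M/2)/M)) + 1/(4*(2*Real.sin (M/2)/M)^2)) * (cc (i+1) - cc i)) * 2
        = ((1/(3*(2*Real.sin (M/2)/M)) + 1/(4*(2*Real.sin (M/2)/M)^2)) * (cc (N-1) - cc 0)) * 2 := by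
      rw [← Finset.sum_mul, ← Finset.mul_sum, htel]
    have hccd : cc (N-1) - cc 0 ≤ 2*M := by
      have h1 := abs_le.1 (hccM (N-1) (by omega))
      have h2 := abs_le.1 (hccM 0 (by omega))
      linarith
    calc ‖w (N-1) • (∑ i ∈ range N, d i)
          - ∑ i ∈ range (N-1), (w (i+1) - w i) • (∑ j ∈ range (i+1), d j)‖
        ≤ ‖w (N-1) • (∑ i ∈ range N, d i)‖
          + ‖∑ i ∈ range (N-1), (w (i+1) - w i) • (∑ j ∈ range (i+1), d j)‖ := norm_sub_le _ _
      _ ≤ ((1/2)/(2*Real.sin (M/2)/M)) * 2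
          + ((1/(3*(2*Real.sin (M/2)/M)) + 1/(4*(2*Real.sin (M/2)/M)^2)) * (cc (N-1) - cc 0)) * 2 :=
          add_le_add hterm1 (hterm2.trans (le_of_eq htel2))
      _ ≤ ((1/2)/(2*Real.sin (M/2)/M)) * 2
          + ((1/(3*(2*Real.sin (M/2)/M)) + 1/(4*(2*Real.sin (M/2)/M)^2)) * (2*M)) * 2 := by
          have := mul_le_mul_of_nonneg_left hccd hL0
          nlinarith [this]
      _ = 2*((1/2)/(2*Real.sin (M/2)/M))
          + 4*(1/(3*(2*Real.sin (M/2)/M)) + 1/(4*(2*Real.sin (M/2)/M)^2))*M := by ring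
  calc ‖(∑ i ∈ range N, ((F ((i:ℝ)+1) - ∫ x in (i:ℝ)..((i:ℝ)+1), F x) - w i * d i))
        + ∑ i ∈ range N, w i • d i‖
      ≤ ‖∑ i ∈ range N, ((F ((i:ℝ)+1) - ∫ x in (i:ℝ)..((i:ℝ)+1), F x) - w i * d i)‖
        + ‖∑ i ∈ range N, w i • d i‖ := norm_add_le _ _
    _ ≤ 2*M + (2*((1/2)/(2*Real.sin (M/2)/M))
        + 4*(1/(3*(2*Real.sin (M/2)/M)) + 1/(4*(2*Real.sin (M/2)/M)^2))*M) := add_le_add hA hB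
    _ = 2*M + 2*((1/2)/(2*Real.sin (M/2)/M))
        + 4*(1/(3*(2*Real.sin (M/2)/M)) + 1/(4*(2*Real.sin (M/2)/M)^2))*M := by ring

lemma intervalIntegral_conj {f : ℝ → ℂ} {a b : ℝ} :
    ∫ x in a..b, (starRingEnd ℂ) (f x) = (starRingEnd ℂ) (∫ x in a..b, f x) := by
  unfold intervalIntegral
  rw [integral_conj, integral_conj, map_sub]

/-- Van der Corput / Zygmund comparison of a trigonometric sum with the corresponding
oscillatory integral: for `0 < M < 2π` there is a constant `C_M`, depending only on `M`,
such that for every `N ≥ 1` and every smooth `Φ : ℝ → ℝ` whose derivative is monotone on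
`[0,N]` and satisfies `|Φ'| ≤ M` there, one has
`|∑_{n=1}^N e^{iΦ(n)} - ∫_0^N e^{iΦ(x)} dx| ≤ C_M`. -/
theorem stmt9 (M : ℝ) (hM0 : 0 < M) (hM : M < 2 * Real.pi) :
    ∃ C : ℝ, ∀ N : ℕ, 1 ≤ N → ∀ Φ : ℝ → ℝ, ContDiff ℝ (⊤ : ℕ∞) Φ →
      (MonotoneOn (deriv Φ) (Set.Icc 0 (N : ℝ)) ∨
        AntitoneOn (deriv Φ) (Set.Icc 0 (N : ℝ))) →
      (∀ x ∈ Set.Icc (0 : ℝ) (N : ℝ), |deriv Φ x| ≤ M) →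
      ‖(∑ n ∈ Finset.Icc 1 N, Complex.exp (Complex.I * (Φ n : ℂ))) -
          ∫ x in (0 : ℝ)..(N : ℝ), Complex.exp (Complex.I * (Φ x : ℂ))‖ ≤ C := by
  refine ⟨2*M + 2*((1/2)/(2*Real.sin (M/2)/M))
      + 4*(1/(3*(2*Real.sin (M/2)/M)) + 1/(4*(2*Real.sin (M/2)/M)^2))*M, ?_⟩
  intro N hN Φ hΦ hcase hb
  rcases hcase with hmono | hanti
  · exact mono_case hM0 hM N hN Φ hΦ hmono hb
  · have hderivneg : ∀ x : ℝ, deriv (fun y => -Φ y) x = - deriv Φ x := by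
      intro x
      exact deriv.neg
    have h := mono_case hM0 hM N hN (fun y => -Φ y) hΦ.neg
      (by
        intro a ha b hb' hab
        rw [hderivneg, hderivneg]
        exact neg_le_neg (hanti ha hb' hab))
      (by
        intro x hx
        rw [hderivneg, abs_neg]
        exact hb x hx)
    have hpt : ∀ r : ℝ, (starRingEnd ℂ) (Complex.exp (Complex.I * (r:ℂ)))
        = Complex.exp (Complex.I * ((-r : ℝ):ℂ)) := by
      intro r
      rw [← Complex.exp_conj, map_mul, Complex.conj_I, Complex.conj_ofReal]
      push_cast
      ring_nf
    have hconj : (starRingEnd ℂ) ((∑ n ∈ Finset.Icc 1 N, Complex.exp (Complex.I * (Φ n : ℂ))) -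
          ∫ x in (0 : ℝ)..(N : ℝ), Complex.exp (Complex.I * (Φ x : ℂ)))
        = (∑ n ∈ Finset.Icc 1 N, Complex.exp (Complex.I * ((-Φ n : ℝ) : ℂ))) -
          ∫ x in (0 : ℝ)..(N : ℝ), Complex.exp (Complex.I * ((-Φ x : ℝ) : ℂ)) := by
      rw [map_sub, map_sum, ← intervalIntegral_conj]
      congr 1
      · exact Finset.sum_congr rfl fun n _ => hpt (Φ n)
      · exact intervalIntegral.integral_congr fun x _ => hpt (Φ x)
    have hnorm : ‖(∑ n ∈ Finset.Icc 1 N, Complex.exp (Complex.I * (Φ n : ℂ))) -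
          ∫ x in (0 : ℝ)..(N : ℝ), Complex.exp (Complex.I * (Φ x : ℂ))‖
        = ‖(∑ n ∈ Finset.Icc 1 N, Complex.exp (Complex.I * ((-Φ n : ℝ) : ℂ))) -
          ∫ x in (0 : ℝ)..(N : ℝ), Complex.exp (Complex.I * ((-Φ x : ℝ) : ℂ))‖ := by
      rw [← hconj, RCLike.norm_conj]
    rw [hnorm]
    exact h
end

section
/- Let N > 0 and 0 < t < 1, and set I(N,t) = ∫_0^1 e^{−iN(y−t)^2} dy. Then |I(N,t) − √(π/N) e^{−iπ/4}| ≤ (1/t + 1/(1−t)) · (1/N). -/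
/-!
For `re b > 0` the Gaussian integral over `ℝ` is `(π / b) ^ (1 / 2)`, so the error made by
integrating over `[-s, r]` instead consists of two tails. Writing
`exp (-b x²) = -(2 b x)⁻¹ · (exp (-b x²))'` and integrating by parts once bounds the tail beyond
`a > 0` by `1 / (‖b‖ a)`, uniformly for `re b ≥ 0`. Both sides of the resulting estimate are
continuous in `b`, so it survives the limit `b → N i`, where
`(π / (N i)) ^ (1 / 2) = √(π / N) e^{-iπ/4}`.
-/

open Complex MeasureTheory intervalIntegral Filter Topology Set
open scoped Real

theorem hasDerivAt_cexp_neg_mul_sq (b : ℂ) (x : ℝ) :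
    HasDerivAt (fun x : ℝ => cexp (-b * (x : ℂ) ^ 2)) (-2 * b * x * cexp (-b * (x : ℂ) ^ 2)) x := by
  have := (((hasDerivAt_pow 2 (x : ℂ)).const_mul (-b)).cexp).comp_ofReal
  convert this using 1
  ring

theorem intervalIntegrable_inv_sq {a R : ℝ} (ha : 0 < a) (haR : a ≤ R) :
    IntervalIntegrable (fun x : ℝ => (x ^ 2)⁻¹) volume a R :=
  ContinuousOn.intervalIntegrable <| ContinuousOn.inv₀ (by fun_prop) fun x hx =>
    (pow_pos (ha.trans_le (uIcc_of_le haR ▸ hx).1) 2).ne'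

theorem integral_inv_sq {a R : ℝ} (ha : 0 < a) (haR : a ≤ R) :
    ∫ x in a..R, (x ^ 2)⁻¹ = 1 / a - 1 / R := by
  have hderiv (x : ℝ) (hx : x ∈ uIcc a R) : HasDerivAt (fun x : ℝ => -x⁻¹) (x ^ 2)⁻¹ x :=
    (hasDerivAt_inv (ha.trans_le (uIcc_of_le haR ▸ hx).1).ne').neg.congr_deriv (neg_neg _)
  rw [integral_eq_sub_of_hasDerivAt hderiv (intervalIntegrable_inv_sq ha haR)]
  ring

section
variable {b : ℂ}

theorem norm_cexp_neg_mul_sq_le_one (hb : 0 ≤ b.re) (x : ℝ) : ‖cexp (-b * (x : ℂ) ^ 2)‖ ≤ 1 := by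
  rw [norm_cexp_neg_mul_sq, Real.exp_le_one_iff]
  nlinarith [sq_nonneg x]

theorem hasDerivAt_neg_inv_two_mul (hb : b ≠ 0) {x : ℝ} (hx : x ≠ 0) :
    HasDerivAt (fun x : ℝ => -(2 * b * x)⁻¹) (2 * b * (x : ℂ) ^ 2)⁻¹ x := by
  have hx' : (x : ℂ) ≠ 0 := ofReal_ne_zero.mpr hx
  have h : HasDerivAt (fun y : ℂ => -(2 * b * y)⁻¹) (2 * b * (x : ℂ) ^ 2)⁻¹ x := by
    refine (((hasDerivAt_id (x : ℂ)).const_mul (2 * b)).inv (by simp [hb, hx'])).neg.congr_deriv ?_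
    simp only [id]
    field_simp
  exact h.comp_ofReal

theorem norm_intervalIntegral_inv_two_mul_sq_mul_cexp_le (hb : 0 ≤ b.re) {a R : ℝ}
    (ha : 0 < a) (haR : a ≤ R) :
    ‖∫ x in a..R, (2 * b * (x : ℂ) ^ 2)⁻¹ * cexp (-b * (x : ℂ) ^ 2)‖ ≤
      (1 / a - 1 / R) / (2 * ‖b‖) := by
  have hbound : ∀ x ∈ Ioc a R,
      ‖(2 * b * (x : ℂ) ^ 2)⁻¹ * cexp (-b * (x : ℂ) ^ 2)‖ ≤ (2 * ‖b‖)⁻¹ * (x ^ 2)⁻¹ := by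
    intro x _
    rw [norm_mul]
    refine mul_le_of_le_one_right (by positivity) (norm_cexp_neg_mul_sq_le_one hb x) |>.trans_eq ?_
    simp only [mul_inv_rev, Complex.norm_mul, norm_inv, norm_pow, norm_real, Real.norm_eq_abs,
      sq_abs, norm_ofNat]
    ring
  calc _ ≤ ∫ x in a..R, (2 * ‖b‖)⁻¹ * (x ^ 2)⁻¹ :=
        norm_integral_le_of_norm_le haR (ae_of_all _ hbound)
          ((intervalIntegrable_inv_sq ha haR).const_mul _)
    _ = (1 / a - 1 / R) / (2 * ‖b‖) := by
        rw [intervalIntegral.integral_const_mul, integral_inv_sq ha haR]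
        ring

theorem norm_intervalIntegral_cexp_neg_mul_sq_le (hb0 : b ≠ 0) (hb : 0 ≤ b.re) {a R : ℝ}
    (ha : 0 < a) (haR : a ≤ R) :
    ‖∫ x in a..R, cexp (-b * (x : ℂ) ^ 2)‖ ≤ 1 / (‖b‖ * a) := by
  set u : ℝ → ℂ := fun x => -(2 * b * x)⁻¹
  set w : ℝ → ℂ := fun x => cexp (-b * (x : ℂ) ^ 2)
  have hpos : ∀ x ∈ uIcc a R, 0 < x := fun x hx => ha.trans_le (uIcc_of_le haR ▸ hx).1
  have hcont : ContinuousOn (fun x : ℝ => (2 * b * (x : ℂ) ^ 2)⁻¹) (uIcc a R) :=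
    ContinuousOn.inv₀ (by fun_prop) fun x hx => by simp [hb0, (hpos x hx).ne']
  have hparts := intervalIntegral.integral_mul_deriv_eq_deriv_mul
    (fun x hx => hasDerivAt_neg_inv_two_mul hb0 (hpos x hx).ne')
    (fun x _ => hasDerivAt_cexp_neg_mul_sq b x)
    hcont.intervalIntegrable
    ((by fun_prop : Continuous fun x : ℝ => -2 * b * x * cexp (-b * (x : ℂ) ^ 2)).intervalIntegrable
      _ _)
  have hnorm_u : ∀ x, 0 < x → ‖u x‖ = 1 / (2 * ‖b‖ * x) := by
    intro x hx
    simp [u, abs_of_pos hx]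
  have hnorm_uw : ∀ x, 0 < x → ‖u x * w x‖ ≤ 1 / (2 * ‖b‖ * x) := fun x hx =>
    (norm_mul_le _ _).trans <| by
      rw [hnorm_u x hx]
      exact mul_le_of_le_one_right (by positivity) (norm_cexp_neg_mul_sq_le_one hb x)
  have hw : ∫ x in a..R, w x = ∫ x in a..R, u x * (-2 * b * x * w x) :=
    integral_congr fun x hx => by
      have : (x : ℂ) ≠ 0 := ofReal_ne_zero.mpr (hpos x hx).ne'
      simp only [u]
      field_simp
  rw [hw, hparts]
  calc _ ≤ ‖u R * w R‖ + ‖u a * w a‖ + ‖∫ x in a..R, (2 * b * (x : ℂ) ^ 2)⁻¹ * w x‖ :=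
        norm_sub_le_of_le (norm_sub_le _ _) le_rfl
    _ ≤ 1 / (2 * ‖b‖ * R) + 1 / (2 * ‖b‖ * a) + (1 / a - 1 / R) / (2 * ‖b‖) :=
        add_le_add (add_le_add (hnorm_uw R (ha.trans_le haR)) (hnorm_uw a ha))
          (norm_intervalIntegral_inv_two_mul_sq_mul_cexp_le hb ha haR)
    _ = 1 / (‖b‖ * a) := by
        field_simp
        ring

theorem norm_integral_Ioi_cexp_neg_mul_sq_le (hb : 0 < b.re) {a : ℝ} (ha : 0 < a) :
    ‖∫ x in Ioi a, cexp (-b * (x : ℂ) ^ 2)‖ ≤ 1 / (‖b‖ * a) := by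
  have hb0 : b ≠ 0 := fun h => by simp [h] at hb
  refine le_of_tendsto (intervalIntegral_tendsto_integral_Ioi a
    (integrable_cexp_neg_mul_sq hb).integrableOn tendsto_id).norm ?_
  filter_upwards [eventually_ge_atTop a] with R hR
  exact norm_intervalIntegral_cexp_neg_mul_sq_le hb0 hb.le ha hR

theorem norm_integral_Iic_cexp_neg_mul_sq_le (hb : 0 < b.re) {a : ℝ} (ha : 0 < a) :
    ‖∫ x in Iic (-a), cexp (-b * (x : ℂ) ^ 2)‖ ≤ 1 / (‖b‖ * a) := by
  rw [← integral_comp_neg_Ioi]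
  simpa using norm_integral_Ioi_cexp_neg_mul_sq_le hb ha

theorem norm_intervalIntegral_cexp_neg_mul_sq_sub_le (hb : 0 < b.re) {s r : ℝ}
    (hs : 0 < s) (hr : 0 < r) :
    ‖(∫ x in -s..r, cexp (-b * (x : ℂ) ^ 2)) - (π / b) ^ (1 / 2 : ℂ)‖ ≤ (1 / s + 1 / r) / ‖b‖ := by
  have hint := integrable_cexp_neg_mul_sq hb
  rw [← integral_gaussian_complex hb, ← integral_Iic_sub_Iic hint.integrableOn hint.integrableOn,
    ← integral_Iic_add_Ioi (b := r) hint.integrableOn hint.integrableOn]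
  calc _ = ‖(∫ x in Iic (-s), cexp (-b * (x : ℂ) ^ 2)) +
        ∫ x in Ioi r, cexp (-b * (x : ℂ) ^ 2)‖ := by
        rw [← norm_neg]
        congr 1
        ring
    _ ≤ 1 / (‖b‖ * s) + 1 / (‖b‖ * r) :=
        norm_add_le_of_le (norm_integral_Iic_cexp_neg_mul_sq_le hb hs)
          (norm_integral_Ioi_cexp_neg_mul_sq_le hb hr)
    _ = (1 / s + 1 / r) / ‖b‖ := by ring

theorem ofReal_div_mem_slitPlane (hb0 : b ≠ 0) (hb : 0 ≤ b.re) {x : ℝ} (hx : 0 < x) :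
    (x : ℂ) / b ∈ slitPlane := by
  have hnormSq : 0 < normSq b := normSq_pos.mpr hb0
  rcases hb.lt_or_eq with hre | hre
  · left
    simp only [div_re, ofReal_re, ofReal_im, zero_mul, zero_div, add_zero]
    positivity
  · right
    have him : b.im ≠ 0 := fun h => hb0 (Complex.ext hre.symm h)
    simp [div_im, hx.ne', him, hnormSq.ne']

theorem norm_intervalIntegral_cexp_neg_mul_sq_sub_le_of_re_nonneg (hb0 : b ≠ 0) (hb : 0 ≤ b.re)
    {s r : ℝ} (hs : 0 < s) (hr : 0 < r) :
    ‖(∫ x in -s..r, cexp (-b * (x : ℂ) ^ 2)) - (π / b) ^ (1 / 2 : ℂ)‖ ≤ (1 / s + 1 / r) / ‖b‖ := by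
  have hshift : Tendsto (fun ε : ℝ => b + ε) (𝓝[>] 0) (𝓝 b) := by
    have : Continuous fun ε : ℝ => b + ε := by fun_prop
    simpa using (this.tendsto 0).mono_left nhdsWithin_le_nhds
  have hint : Continuous fun z : ℂ => ∫ x in -s..r, cexp (-z * (x : ℂ) ^ 2) :=
    continuous_parametric_intervalIntegral_of_continuous' (by fun_prop) _ _
  have hsqrt : ContinuousAt (fun z : ℂ => (π / z) ^ (1 / 2 : ℂ)) b :=
    (continuousAt_cpow_const (ofReal_div_mem_slitPlane hb0 hb Real.pi_pos)).comp
      (continuousAt_const.div continuousAt_id hb0)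
  have hrhs : ContinuousAt (fun z : ℂ => (1 / s + 1 / r) / ‖z‖) b :=
    continuousAt_const.div continuous_norm.continuousAt (norm_ne_zero_iff.mpr hb0)
  refine le_of_tendsto_of_tendsto (((hint.continuousAt.sub hsqrt).norm).tendsto.comp hshift)
    (hrhs.tendsto.comp hshift) ?_
  filter_upwards [self_mem_nhdsWithin] with ε (hε : 0 < ε)
  exact norm_intervalIntegral_cexp_neg_mul_sq_sub_le
    (by simpa using add_pos_of_nonneg_of_pos hb hε) hs hr
end

theorem cpow_half_pi_div_ofReal_mul_I {N : ℝ} (hN : 0 < N) :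
    ((π : ℂ) / (N * I)) ^ (1 / 2 : ℂ) = (√(π / N) : ℂ) * cexp (-I * π / 4) := by
  have hN' : (N : ℂ) ≠ 0 := ofReal_ne_zero.mpr hN.ne'
  have hdiv : (π : ℂ) / (N * I) = ((π / N : ℝ) : ℂ) * (-I) := by
    push_cast
    field_simp
    simp
  have hlog : log (((π / N : ℝ) : ℂ) * (-I)) * (1 / 2) =
      ((Real.log (π / N) / 2 : ℝ) : ℂ) + -I * π / 4 := by
    rw [log_ofReal_mul (by positivity) (neg_ne_zero.mpr I_ne_zero), log_neg_I]
    push_cast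
    ring
  rw [hdiv, cpow_def_of_ne_zero (mul_ne_zero (by simp [hN.ne', Real.pi_ne_zero]) (by simp)), hlog,
    exp_add, ← ofReal_exp, Real.sqrt_eq_rpow, Real.rpow_def_of_pos (by positivity)]
  ring_nf

/-- Fresnel-type estimate: for `N > 0` and `0 < t < 1`, the integral
`I(N,t) = ∫_0^1 e^{-iN(y-t)^2} dy` satisfies
`|I(N,t) - √(π/N) e^{-iπ/4}| ≤ (1/t + 1/(1-t))/N`. -/
theorem stmt10 (N t : ℝ) (hN : 0 < N) (ht0 : 0 < t) (ht1 : t < 1) :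
    ‖(∫ y in (0 : ℝ)..1, Complex.exp (-Complex.I * (N : ℂ) * ((y : ℂ) - (t : ℂ)) ^ 2)) -
        (Real.sqrt (Real.pi / N) : ℂ) * Complex.exp (-Complex.I * (Real.pi : ℂ) / 4)‖ ≤
      (1 / t + 1 / (1 - t)) * (1 / N) := by
  have hshift : ∫ y in (0 : ℝ)..1, cexp (-I * N * ((y : ℂ) - t) ^ 2) =
      ∫ x in -t..1 - t, cexp (-(N * I) * (x : ℂ) ^ 2) := by
    rw [← zero_sub t, ← integral_comp_sub_right (fun x : ℝ => cexp (-(N * I) * (x : ℂ) ^ 2))]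
    congr 1 with y
    push_cast
    ring_nf
  have hnorm : ‖(N : ℂ) * I‖ = N := by simp [hN.le]
  calc _ = ‖(∫ x in -t..1 - t, cexp (-(N * I) * (x : ℂ) ^ 2)) - (π / (N * I)) ^ (1 / 2 : ℂ)‖ := by
        rw [hshift, cpow_half_pi_div_ofReal_mul_I hN]
    _ ≤ (1 / t + 1 / (1 - t)) / ‖(N : ℂ) * I‖ :=
        norm_intervalIntegral_cexp_neg_mul_sq_sub_le_of_re_nonneg (by simp [hN.ne']) (by simp)
          ht0 (sub_pos.mpr ht1)
    _ = (1 / t + 1 / (1 - t)) * (1 / N) := by rw [hnorm, div_eq_mul_one_div]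
end

section
/- Let N > 0 and s > 0. Then the improper integral J(N,s) = lim_{R→∞} ∫_0^R e^{−iN(z+s)^2} dz exists in ℂ and satisfies |J(N,s)| ≤ 1/(Ns). -/
/-!
After the shift `w = z + s` this is the tail `∫_s^∞ e(w) dw` of the Fresnel integral, where
`e(w) = exp(-iNw²)`. Since `e'(w) = -2iNw e(w)`, integration by parts gives
`∫_s^R e = [e(w)/(-2iNw)]_s^R - ∫_s^R e(w)/(2iNw²) dw`. The boundary term at `R` tends to `0`,
the one at `s` has modulus `1/(2Ns)`, and the remaining integral converges absolutely with
modulus at most `(2N)⁻¹ ∫_s^∞ w⁻² dw = 1/(2Ns)`.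
-/

open MeasureTheory Filter Set Complex Topology

lemma integrableOn_Ioi_inv_sq {a : ℝ} (ha : 0 < a) :
    IntegrableOn (fun w : ℝ => (w ^ 2)⁻¹) (Ioi a) := by
  refine (integrableOn_Ioi_rpow_of_lt (by norm_num : (-2 : ℝ) < -1) ha).congr_fun
    (fun w hw => ?_) measurableSet_Ioi
  show w ^ (-2 : ℝ) = (w ^ 2)⁻¹
  rw [Real.rpow_neg (le_of_lt (ha.trans hw)), Real.rpow_two]

lemma integral_Ioi_inv_sq {a : ℝ} (ha : 0 < a) : ∫ w in Ioi a, (w ^ 2)⁻¹ = a⁻¹ := by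
  have hpow : EqOn (fun w : ℝ => w ^ (-2 : ℝ)) (fun w => (w ^ 2)⁻¹) (Ioi a) := fun w hw => by
    simp only
    rw [Real.rpow_neg (le_of_lt (ha.trans hw)), Real.rpow_two]
  rw [← setIntegral_congr_fun measurableSet_Ioi hpow,
    integral_Ioi_rpow_of_lt (by norm_num : (-2 : ℝ) < -1) ha]
  norm_num [Real.rpow_neg_one]

lemma norm_cexp_neg_I_mul_sq (N w : ℝ) : ‖cexp (-I * N * w ^ 2)‖ = 1 := by
  rw [show -I * N * w ^ 2 = ((-N * w ^ 2 : ℝ) : ℂ) * I by push_cast; ring]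
  exact norm_exp_ofReal_mul_I _

lemma norm_cexp_neg_I_mul_sq_div (N w : ℝ) :
    ‖cexp (-I * N * w ^ 2) / (2 * I * N * w ^ 2)‖ = (2 * |N|)⁻¹ * (w ^ 2)⁻¹ := by
  rw [norm_div, norm_cexp_neg_I_mul_sq]
  simp [← ofReal_pow]
  ring

lemma norm_cexp_neg_I_mul_sq_div_linear (N : ℝ) {w : ℝ} (hw : 0 < w) :
    ‖cexp (-I * N * w ^ 2) / (-2 * I * N * w)‖ = (2 * |N| * w)⁻¹ := by
  rw [norm_div, norm_cexp_neg_I_mul_sq]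
  simp [abs_of_pos hw]

lemma hasDerivAt_cexp_neg_I_mul_sq_div {N w : ℝ} (hN : N ≠ 0) (hw : w ≠ 0) :
    HasDerivAt (fun x : ℝ => cexp (-I * N * x ^ 2) / (-2 * I * N * x))
      (cexp (-I * N * w ^ 2) + cexp (-I * N * w ^ 2) / (2 * I * N * w ^ 2)) w := by
  have hNc : (N : ℂ) ≠ 0 := ofReal_ne_zero.mpr hN
  have hwc : (w : ℂ) ≠ 0 := ofReal_ne_zero.mpr hw
  have hden : -2 * I * N * (w : ℂ) ≠ 0 := by simp [hNc, hwc]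
  have h := ((((hasDerivAt_id (w : ℂ)).pow 2).const_mul (-I * N)).cexp.div
    ((hasDerivAt_id (w : ℂ)).const_mul (-2 * I * N)) hden).comp_ofReal
  convert h using 1
  · simp
  · simp only [id, Pi.pow_apply]
    field_simp
    ring

lemma integrableOn_cexp_neg_I_mul_sq_div (N : ℝ) {a : ℝ} (ha : 0 < a) :
    IntegrableOn (fun w : ℝ => cexp (-I * N * w ^ 2) / (2 * I * N * w ^ 2)) (Ioi a) := by
  refine Integrable.mono' ((integrableOn_Ioi_inv_sq ha).const_mul (2 * |N|)⁻¹)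
    (Measurable.aestronglyMeasurable (by fun_prop)) (Eventually.of_forall fun w => ?_)
  rw [norm_cexp_neg_I_mul_sq_div]

lemma norm_integral_cexp_neg_I_mul_sq_div_le (N : ℝ) {a : ℝ} (ha : 0 < a) :
    ‖∫ w in Ioi a, cexp (-I * N * w ^ 2) / (2 * I * N * w ^ 2)‖ ≤ (2 * |N| * a)⁻¹ :=
  calc ‖∫ w in Ioi a, cexp (-I * N * w ^ 2) / (2 * I * N * w ^ 2)‖
      ≤ ∫ w in Ioi a, ‖cexp (-I * N * w ^ 2) / (2 * I * N * w ^ 2)‖ :=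
        norm_integral_le_integral_norm _
    _ = (2 * |N|)⁻¹ * ∫ w in Ioi a, (w ^ 2)⁻¹ := by
        simp only [norm_cexp_neg_I_mul_sq_div, integral_const_mul]
    _ = (2 * |N| * a)⁻¹ := by rw [integral_Ioi_inv_sq ha]; ring

lemma integral_cexp_neg_I_mul_sq_eq {N a b : ℝ} (hN : N ≠ 0) (ha : 0 < a) (hab : a ≤ b) :
    ∫ w in a..b, cexp (-I * N * w ^ 2) =
      cexp (-I * N * b ^ 2) / (-2 * I * N * b) - cexp (-I * N * a ^ 2) / (-2 * I * N * a) -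
        ∫ w in a..b, cexp (-I * N * w ^ 2) / (2 * I * N * w ^ 2) := by
  have hpos : ∀ w ∈ uIcc a b, 0 < w := fun w hw => ha.trans_le (uIcc_of_le hab ▸ hw).1
  have he : IntervalIntegrable (fun w : ℝ => cexp (-I * N * w ^ 2)) volume a b :=
    (by fun_prop : Continuous fun w : ℝ => cexp (-I * N * w ^ 2)).intervalIntegrable a b
  have hr : IntervalIntegrable (fun w : ℝ => cexp (-I * N * w ^ 2) / (2 * I * N * w ^ 2))
      volume a b :=
    (intervalIntegrable_iff_integrableOn_Ioc_of_le hab).mpr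
      ((integrableOn_cexp_neg_I_mul_sq_div N ha).mono_set Ioc_subset_Ioi_self)
  have hFTC := intervalIntegral.integral_eq_sub_of_hasDerivAt
    (fun w hw => hasDerivAt_cexp_neg_I_mul_sq_div hN (hpos w hw).ne') (he.add hr)
  rw [intervalIntegral.integral_add he hr] at hFTC
  linear_combination hFTC

theorem exists_tendsto_integral_cexp_neg_I_mul_sq {N a : ℝ} (hN : N ≠ 0) (ha : 0 < a) :
    ∃ J : ℂ, Tendsto (fun R : ℝ => ∫ w in a..R, cexp (-I * N * w ^ 2)) atTop (𝓝 J) ∧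
      ‖J‖ ≤ 1 / (|N| * a) := by
  set r : ℝ → ℂ := fun w => cexp (-I * N * w ^ 2) / (2 * I * N * w ^ 2)
  set B : ℝ → ℂ := fun w => cexp (-I * N * w ^ 2) / (-2 * I * N * w)
  have hB : Tendsto B atTop (𝓝 0) := by
    refine squeeze_zero_norm' ?_ (tendsto_inv_atTop_zero.comp
      (tendsto_id.const_mul_atTop (by positivity : 0 < 2 * |N|)))
    filter_upwards [eventually_gt_atTop 0] with R hR
    exact (norm_cexp_neg_I_mul_sq_div_linear N hR).le
  have hr : Tendsto (fun R => ∫ w in a..R, r w) atTop (𝓝 (∫ w in Ioi a, r w)) :=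
    intervalIntegral_tendsto_integral_Ioi a (integrableOn_cexp_neg_I_mul_sq_div N ha) tendsto_id
  refine ⟨-B a - ∫ w in Ioi a, r w, ?_, ?_⟩
  · have hlim : Tendsto (fun R => B R - B a - ∫ w in a..R, r w) atTop
        (𝓝 (-B a - ∫ w in Ioi a, r w)) := by
      simpa using (hB.sub_const (B a)).sub hr
    refine hlim.congr' ?_
    filter_upwards [eventually_ge_atTop a] with R hR
    exact (integral_cexp_neg_I_mul_sq_eq hN ha hR).symm
  · calc ‖-B a - ∫ w in Ioi a, r w‖ ≤ ‖B a‖ + ‖∫ w in Ioi a, r w‖ := by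
          simpa using norm_sub_le (-B a) _
      _ ≤ (2 * |N| * a)⁻¹ + (2 * |N| * a)⁻¹ :=
          add_le_add (norm_cexp_neg_I_mul_sq_div_linear N ha).le
            (norm_integral_cexp_neg_I_mul_sq_div_le N ha)
      _ = 1 / (|N| * a) := by field_simp; ring

/-- For `N > 0` and `s > 0`, the improper integral
`J(N,s) = lim_{R→∞} ∫_0^R e^{-iN(z+s)^2} dz` exists in `ℂ` and `|J(N,s)| ≤ 1/(Ns)`. -/
theorem stmt11 (N s : ℝ) (hN : 0 < N) (hs : 0 < s) :
    ∃ J : ℂ,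
      Filter.Tendsto
        (fun R : ℝ =>
          ∫ z in (0 : ℝ)..R, Complex.exp (-Complex.I * (N : ℂ) * ((z : ℂ) + (s : ℂ)) ^ 2))
        Filter.atTop (nhds J) ∧
      ‖J‖ ≤ 1 / (N * s) := by
  obtain ⟨J, hJ, hJle⟩ := exists_tendsto_integral_cexp_neg_I_mul_sq hN.ne' hs
  refine ⟨J, ?_, by rwa [abs_of_pos hN] at hJle⟩
  have hshift : ∀ R : ℝ, ∫ z in (0 : ℝ)..R, cexp (-I * N * ((z : ℂ) + s) ^ 2) =
      ∫ w in s..R + s, cexp (-I * N * (w : ℂ) ^ 2) := fun R => by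
    simpa only [zero_add, ofReal_add] using
      intervalIntegral.integral_comp_add_right (fun w : ℝ => cexp (-I * N * (w : ℂ) ^ 2)) s
        (a := 0) (b := R)
  simpa only [hshift, Function.comp_def, id] using
    hJ.comp (tendsto_atTop_add_const_right atTop s tendsto_id)
end
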